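/- arXiv:2408.02968 — 8 statements merged into one kernel-verified Lean document; each statement's English description precedes it below -/
import Mathlib

section
/- Let M₁, M₂, M₃, M₄, M₅ be positive integers such that 1 + μ(M₁)/φ(M₁) + μ(M₂)/φ(M₂) + μ(M₃)/φ(M₃) + μ(M₄)/φ(M₄) + μ(M₅)/φ(M₅) = 0 in ℚ. Then for some index i ∈ {1,2,3,4,5}, μ(Mᵢ)/φ(Mᵢ) ∈ {-1, -1/2, -1/4}. -/
/-- The ratio μ(M)/φ(M) in ℚ. -/
def moebiusTotientRatio (M : ℕ) : ℚ :=
  ((ArithmeticFunction.moebius M : ℤ) : ℚ) / (Nat.totient M : ℚ)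

lemma moebiusTotientRatio_lower (M : ℕ) (hM : 0 < M)
    (h : moebiusTotientRatio M ∉ ({-1, -1/2, -1/4} : Set ℚ)) :
    -1/6 ≤ moebiusTotientRatio M := by
  have ht : 0 < M.totient := Nat.totient_pos.mpr hM
  have htq : (0 : ℚ) < (M.totient : ℚ) := by exact_mod_cast ht
  unfold moebiusTotientRatio at *
  rcases eq_or_ne (ArithmeticFunction.moebius M) (-1) with hm | hm
  · rw [hm]
    have hsq : Squarefree M := by
      rw [← ArithmeticFunction.moebius_ne_zero_iff_squarefree, hm]; norm_num
    have hM2 : 2 < M := by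
      rcases Nat.lt_or_ge M 3 with h3 | h3
      · interval_cases M
        · simp at hm
        · exfalso; apply h
          simp only [Set.mem_insert_iff, Set.mem_singleton_iff]
          left; norm_num [hm]
      · exact h3
    have heven : Even M.totient := Nat.totient_even hM2
    have h2 : M.totient ≠ 2 := by
      intro h2; apply h
      simp only [Set.mem_insert_iff, Set.mem_singleton_iff]
      right; left; rw [h2, hm]; norm_num
    have h4 : M.totient ≠ 4 := by
      intro h4; apply h
      simp only [Set.mem_insert_iff, Set.mem_singleton_iff]
      right; right; rw [h4, hm]; norm_num
    have h6 : 6 ≤ M.totient := by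
      obtain ⟨k, hk⟩ := heven
      omega
    have h6q : (6 : ℚ) ≤ (M.totient : ℚ) := by exact_mod_cast h6
    push_cast
    rw [div_le_div_iff₀ (by norm_num) htq] at *
    nlinarith
  · have hge : 0 ≤ ArithmeticFunction.moebius M := by
      by_cases hs : Squarefree M
      · rw [ArithmeticFunction.moebius_apply_of_squarefree hs] at *
        rcases Nat.even_or_odd (ArithmeticFunction.cardFactors M) with he | ho
        · rw [he.neg_one_pow]; norm_num
        · rw [ho.neg_one_pow] at hm; exact absurd rfl hm
      · rw [ArithmeticFunction.moebius_eq_zero_of_not_squarefree hs]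
    have : (0:ℚ) ≤ ((ArithmeticFunction.moebius M : ℤ) : ℚ) / (M.totient : ℚ) := by
      apply div_nonneg _ htq.le
      exact_mod_cast hge
    linarith

theorem stmt_4 (M₁ M₂ M₃ M₄ M₅ : ℕ)
    (h₁ : 0 < M₁) (h₂ : 0 < M₂) (h₃ : 0 < M₃) (h₄ : 0 < M₄) (h₅ : 0 < M₅)
    (hsum : 1 + moebiusTotientRatio M₁ + moebiusTotientRatio M₂ + moebiusTotientRatio M₃ +
      moebiusTotientRatio M₄ + moebiusTotientRatio M₅ = 0) :
    moebiusTotientRatio M₁ ∈ ({-1, -1/2, -1/4} : Set ℚ) ∨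
    moebiusTotientRatio M₂ ∈ ({-1, -1/2, -1/4} : Set ℚ) ∨
    moebiusTotientRatio M₃ ∈ ({-1, -1/2, -1/4} : Set ℚ) ∨
    moebiusTotientRatio M₄ ∈ ({-1, -1/2, -1/4} : Set ℚ) ∨
    moebiusTotientRatio M₅ ∈ ({-1, -1/2, -1/4} : Set ℚ) := by
  by_contra hc
  push_neg at hc
  obtain ⟨hc1, hc2, hc3, hc4, hc5⟩ := hc
  have b1 := moebiusTotientRatio_lower M₁ h₁ hc1
  have b2 := moebiusTotientRatio_lower M₂ h₂ hc2
  have b3 := moebiusTotientRatio_lower M₃ h₃ hc3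
  have b4 := moebiusTotientRatio_lower M₄ h₄ hc4
  have b5 := moebiusTotientRatio_lower M₅ h₅ hc5
  linarith
end

section
/- Let N be a positive integer, let ζ = exp(2πi/N) ∈ ℂ, and let a, b be integers. For an integer k define the Ramanujan sum c_N(k) = Σ_{j ∈ (ℤ/Nℤ)ˣ} ζ^(k·j), the sum ranging over the units of ℤ/Nℤ (using any integer representative of j). If 1 + ζ^a + ζ^b + ζ^(2a+3b) + ζ^(3a+2b) + ζ^(3a+3b) = 0, then φ(N) + c_N(a) + c_N(b) + c_N(2a+3b) + c_N(3a+2b) + c_N(3a+3b) = 0. -/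
open Polynomial

theorem stmt_5 (N : ℕ) [NeZero N] (ζ : ℂ)
    (hζ : ζ = Complex.exp (2 * Real.pi * Complex.I / N)) (a b : ℤ)
    (c : ℤ → ℂ)
    (hc : ∀ k : ℤ, c k = ∑ j : (ZMod N)ˣ, ζ ^ (k * ((j : ZMod N).val : ℤ)))
    (h : 1 + ζ ^ a + ζ ^ b + ζ ^ (2 * a + 3 * b) + ζ ^ (3 * a + 2 * b) +
      ζ ^ (3 * a + 3 * b) = 0) :
    (Nat.totient N : ℂ) + c a + c b + c (2 * a + 3 * b) + c (3 * a + 2 * b) +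
      c (3 * a + 3 * b) = 0 := by
  have hNne := NeZero.ne N
  have hN : 0 < N := Nat.pos_of_ne_zero hNne
  have hζ0 : ζ ≠ 0 := by rw [hζ]; exact Complex.exp_ne_zero _
  have hprim : IsPrimitiveRoot ζ N := by
    rw [hζ]; exact Complex.isPrimitiveRoot_exp N hNne
  set e : ℤ → ℕ := fun k => (k % (N : ℤ)).toNat with he
  have hNZ : (N : ℤ) ≠ 0 := by exact_mod_cast hNne
  have hek : ∀ k : ℤ, ζ ^ k = ζ ^ (e k) := by
    intro k
    have h1 : ((e k : ℕ) : ℤ) = k % N :=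
      Int.toNat_of_nonneg (Int.emod_nonneg k hNZ)
    have h2 : ζ ^ ((N : ℕ) : ℤ) = 1 := by
      rw [zpow_natCast]; exact hprim.pow_eq_one
    calc ζ ^ k = ζ ^ (k % N + N * (k / N)) := by rw [Int.emod_add_mul_ediv]
      _ = ζ ^ (k % N) * (ζ ^ ((N : ℕ) : ℤ)) ^ (k / N) := by
          rw [zpow_add₀ hζ0, zpow_mul]
      _ = ζ ^ (k % N) := by rw [h2, one_zpow, mul_one]
      _ = ζ ^ (e k) := by rw [← h1, zpow_natCast]
  -- the polynomial
  set P : Polynomial ℚ := 1 + X ^ (e a) + X ^ (e b) + X ^ (e (2 * a + 3 * b)) +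
    X ^ (e (3 * a + 2 * b)) + X ^ (e (3 * a + 3 * b)) with hP
  have haevalP : ∀ x : ℂ, (aeval x) P = 1 + x ^ (e a) + x ^ (e b) +
      x ^ (e (2 * a + 3 * b)) + x ^ (e (3 * a + 2 * b)) + x ^ (e (3 * a + 3 * b)) := by
    intro x; simp [hP]
  have hPζ : (aeval ζ) P = 0 := by
    rw [haevalP, ← hek, ← hek, ← hek, ← hek, ← hek, h]
  have hmin : minpoly ℚ ζ ∣ P := minpoly.dvd ℚ ζ hPζ
  have hcyc : cyclotomic N ℚ = minpoly ℚ ζ := cyclotomic_eq_minpoly_rat hprim hN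
  obtain ⟨Q, hQ⟩ := hmin
  -- key claim for each unit
  have key : ∀ j : (ZMod N)ˣ,
      1 + ζ ^ (a * ((j : ZMod N).val : ℤ)) + ζ ^ (b * ((j : ZMod N).val : ℤ)) +
      ζ ^ ((2 * a + 3 * b) * ((j : ZMod N).val : ℤ)) +
      ζ ^ ((3 * a + 2 * b) * ((j : ZMod N).val : ℤ)) +
      ζ ^ ((3 * a + 3 * b) * ((j : ZMod N).val : ℤ)) = 0 := by
    intro j
    set u : ℕ := (j : ZMod N).val with hu
    have hcop : Nat.Coprime u N := ZMod.val_coe_unit_coprime j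
    have hprimu : IsPrimitiveRoot (ζ ^ u) N := hprim.pow_of_coprime u hcop
    have hroot : (aeval (ζ ^ u)) (cyclotomic N ℚ) = 0 := by
      have := hprimu.isRoot_cyclotomic hN
      rw [IsRoot] at this
      rw [aeval_def, eval₂_eq_eval_map, map_cyclotomic]
      exact this
    have hPu : (aeval (ζ ^ u)) P = 0 := by
      rw [hQ, map_mul, ← hcyc, hroot, zero_mul]
    rw [haevalP] at hPu
    have hkk : ∀ k : ℤ, (ζ ^ u) ^ (e k) = ζ ^ (k * (u : ℤ)) := by
      intro k
      have h3 : (ζ ^ u) ^ (e k) = (ζ ^ (e k)) ^ u := by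
        rw [← pow_mul, ← pow_mul, Nat.mul_comm]
      rw [h3, ← hek k, ← zpow_natCast (ζ ^ k) u, ← zpow_mul]
    rw [hkk, hkk, hkk, hkk, hkk] at hPu
    exact hPu
  have hcard : (Finset.univ : Finset (ZMod N)ˣ).card = Nat.totient N := by
    simp [ZMod.card_units_eq_totient N]
  have hsum : ∑ j : (ZMod N)ˣ, (1 + ζ ^ (a * ((j : ZMod N).val : ℤ)) +
      ζ ^ (b * ((j : ZMod N).val : ℤ)) +
      ζ ^ ((2 * a + 3 * b) * ((j : ZMod N).val : ℤ)) +
      ζ ^ ((3 * a + 2 * b) * ((j : ZMod N).val : ℤ)) +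
      ζ ^ ((3 * a + 3 * b) * ((j : ZMod N).val : ℤ))) = 0 :=
    Finset.sum_eq_zero fun j _ => key j
  rw [Finset.sum_add_distrib, Finset.sum_add_distrib, Finset.sum_add_distrib,
    Finset.sum_add_distrib, Finset.sum_add_distrib, Finset.sum_const, hcard,
    nsmul_eq_mul, mul_one] at hsum
  rw [hc, hc, hc, hc, hc]
  exact hsum
end

section
/- Let N be a positive integer, let ζ = exp(2πi/N) ∈ ℂ, and let a, b be integers. Set k₁ = a, k₂ = b, k₃ = 2a+3b, k₄ = 3a+2b, k₅ = 3a+3b, and Mᵢ = N / gcd(kᵢ, N) for i = 1,…,5. If 1 + ζ^a + ζ^b + ζ^(2a+3b) + ζ^(3a+2b) + ζ^(3a+3b) = 0, then 1 + Σ_{i=1}^{5} μ(Mᵢ)/φ(Mᵢ) = 0 in ℚ. -/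
/-- The ratio μ(N/gcd(k,N))/φ(N/gcd(k,N)) in ℚ. -/
def moebiusTotientRatioOf (N : ℕ) (k : ℤ) : ℚ :=
  ((ArithmeticFunction.moebius (N / Int.gcd k N) : ℤ) : ℚ) /
    (Nat.totient (N / Int.gcd k N) : ℚ)

open Finset Polynomial
open scoped ArithmeticFunction.Moebius

lemma sumPrimRoots : ∀ n : ℕ, 0 < n → ∀ η : ℂ, IsPrimitiveRoot η n →
    ∑ x ∈ primitiveRoots n ℂ, x = ((μ n : ℤ) : ℂ) := by
  intro n
  induction n using Nat.strong_induction_on with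
  | _ n ih =>
    intro hn η hη
    haveI : NeZero n := ⟨hn.ne'⟩
    have hdisj : (n.divisors : Set ℕ).Pairwise fun i j => Disjoint (primitiveRoots i ℂ) (primitiveRoots j ℂ) :=
      fun i _ j _ hij => IsPrimitiveRoot.disjoint hij
    have hbi : ∑ d ∈ n.divisors, ∑ x ∈ primitiveRoots d ℂ, x
        = ∑ x ∈ nthRootsFinset n (1 : ℂ), x := by
      rw [IsPrimitiveRoot.nthRoots_one_eq_biUnion_primitiveRoots, Finset.sum_biUnion hdisj]
    have hge : ∑ x ∈ nthRootsFinset n (1 : ℂ), x = ∑ i ∈ range n, η ^ i := by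
      refine (Finset.sum_bij (fun i _ => η ^ i) ?_ ?_ ?_ (fun a _ => rfl)).symm
      · intro i _
        exact (Polynomial.mem_nthRootsFinset hn 1).2 (by rw [← pow_mul, mul_comm, pow_mul, hη.pow_eq_one, one_pow])
      · intro i hi j hj hij
        exact hη.pow_inj (mem_range.1 hi) (mem_range.1 hj) hij
      · intro x hx
        obtain ⟨i, hi, hix⟩ := hη.eq_pow_of_pow_eq_one ((Polynomial.mem_nthRootsFinset hn 1).1 hx)
        exact ⟨i, mem_range.2 hi, hix⟩
    have hgeo : ∑ i ∈ range n, η ^ i = if n = 1 then 1 else 0 := by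
      rcases eq_or_lt_of_le (show 1 ≤ n from hn) with h1 | h1
      · simp [← h1]
      · rw [hη.geom_sum_eq_zero h1, if_neg (by omega)]
    -- moebius divisor sum
    have hmu : ∑ d ∈ n.divisors, ((μ d : ℤ) : ℂ) = if n = 1 then 1 else 0 := by
      have := ArithmeticFunction.moebius_mul_coe_zeta
      have h2 : ((μ * ArithmeticFunction.zeta : ArithmeticFunction ℤ)) n = (1 : ArithmeticFunction ℤ) n := by rw [this]
      rw [ArithmeticFunction.coe_mul_zeta_apply, ArithmeticFunction.one_apply] at h2
      have : ((∑ i ∈ n.divisors, μ i : ℤ) : ℂ) = ∑ d ∈ n.divisors, ((μ d : ℤ) : ℂ) := by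
        push_cast
        rfl
      rw [← this, h2]
      split <;> simp
    -- conclude by strong induction
    have hcons := Nat.cons_self_properDivisors hn.ne'
    have hsplit : ∑ d ∈ n.divisors, ∑ x ∈ primitiveRoots d ℂ, x
        = (∑ x ∈ primitiveRoots n ℂ, x) + ∑ d ∈ n.properDivisors, ∑ x ∈ primitiveRoots d ℂ, x := by
      rw [← hcons, Finset.sum_cons]
    have hsplitmu : ∑ d ∈ n.divisors, ((μ d : ℤ) : ℂ)
        = ((μ n : ℤ) : ℂ) + ∑ d ∈ n.properDivisors, ((μ d : ℤ) : ℂ) := by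
      rw [← hcons, Finset.sum_cons]
    have hihsum : ∑ d ∈ n.properDivisors, ∑ x ∈ primitiveRoots d ℂ, x
        = ∑ d ∈ n.properDivisors, ((μ d : ℤ) : ℂ) := by
      refine Finset.sum_congr rfl fun d hd => ?_
      obtain ⟨hdvd, hlt⟩ := Nat.mem_properDivisors.1 hd
      have hdpos : 0 < d := Nat.pos_of_mem_divisors (Nat.mem_divisors.2 ⟨hdvd, hn.ne'⟩)
      obtain ⟨m, hm⟩ := hdvd
      exact ih d hlt hdpos (η ^ m) (hη.pow hn (by rw [hm, mul_comm]))
    have := hbi.trans (hge.trans hgeo)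
    rw [hsplit, hihsum] at this
    rw [hmu] at hsplitmu
    linear_combination this + hsplitmu

lemma sumUnits (n : ℕ) [NeZero n] (η : ℂ) (hη : IsPrimitiveRoot η n) :
    ∑ u : (ZMod n)ˣ, η ^ ((u : ZMod n)).val = ((μ n : ℤ) : ℂ) := by
  have hn : 0 < n := NeZero.pos n
  rw [← sumPrimRoots n hn η hη]
  refine Finset.sum_bij (fun u _ => η ^ ((u : ZMod n)).val) ?_ ?_ ?_ (fun a _ => rfl)
  · intro u _
    exact (mem_primitiveRoots hn).2 (hη.pow_of_coprime _ (ZMod.val_coe_unit_coprime u))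
  · intro u _ v _ huv
    have := hη.pow_inj (ZMod.val_lt _) (ZMod.val_lt _) huv
    exact Units.ext (ZMod.val_injective n this)
  · intro x hx
    have hxp := (mem_primitiveRoots hn).1 hx
    obtain ⟨i, hi, hcop, hix⟩ := (hη.isPrimitiveRoot_iff).1 hxp
    refine ⟨ZMod.unitOfCoprime i hcop, Finset.mem_univ _, ?_⟩
    have : ((ZMod.unitOfCoprime i hcop : ZMod n)).val = i := by
      rw [ZMod.coe_unitOfCoprime, ZMod.val_natCast, Nat.mod_eq_of_lt hi]
    show η ^ ((ZMod.unitOfCoprime i hcop : ZMod n)).val = x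
    rw [this, hix]

lemma fiber_card {G H : Type*} [Group G] [Group H] [Fintype G] [Fintype H] [DecidableEq H]
    (g : G →* H) (hg : Function.Surjective g) (v : H) :
    (Finset.univ.filter (fun u => g u = v)).card = Fintype.card G / Fintype.card H := by
  have key : ∀ w : H, (Finset.univ.filter (fun u => g u = w)).card
      = (Finset.univ.filter (fun u => g u = 1)).card := by
    intro w
    obtain ⟨u0, hu0⟩ := hg w
    refine Finset.card_bij' (fun u _ => u * u0⁻¹) (fun u _ => u * u0) ?_ ?_ ?_ ?_
    · intro u hu
      simp only [Finset.mem_filter, Finset.mem_univ, true_and] at hu ⊢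
      rw [map_mul, hu, map_inv, hu0, mul_inv_cancel]
    · intro u hu
      simp only [Finset.mem_filter, Finset.mem_univ, true_and] at hu ⊢
      rw [map_mul, hu, hu0, one_mul]
    · intro u _; simp
    · intro u _; simp
  have hpart : Fintype.card G = Fintype.card H * (Finset.univ.filter (fun u => g u = 1)).card := by
    rw [← Finset.card_univ (α := G),
      Finset.card_eq_sum_card_fiberwise (fun u _ => Finset.mem_univ (g u))]
    rw [Finset.sum_congr rfl (fun w _ => key w), Finset.sum_const, Finset.card_univ, smul_eq_mul]
  rw [key v, hpart, Nat.mul_div_cancel_left _ Fintype.card_pos]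

lemma sumPow (N : ℕ) [NeZero N] (z : ℂ) (hz : IsPrimitiveRoot z N) (j : ℕ) :
    ∑ u : (ZMod N)ˣ, (z ^ j) ^ ((u : ZMod N)).val
      = ((N.totient / (N / Nat.gcd j N).totient : ℕ) : ℂ) * ((μ (N / Nat.gcd j N) : ℤ) : ℂ) := by
  have hN : 0 < N := NeZero.pos N
  set d := Nat.gcd j N with hd_def
  set M := N / d with hM_def
  have hd : 0 < d := Nat.gcd_pos_of_pos_right j hN
  have hdvdN : d ∣ N := Nat.gcd_dvd_right j N
  have hdM : N = d * M := (Nat.mul_div_cancel' hdvdN).symm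
  have hM : 0 < M := Nat.div_pos (Nat.le_of_dvd hN hdvdN) hd
  haveI : NeZero M := ⟨hM.ne'⟩
  have hη : IsPrimitiveRoot (z ^ j) M := by
    have h1 : IsPrimitiveRoot (z ^ d) M := hz.pow hN hdM
    have h2 := h1.pow_of_coprime (j / d) (Nat.coprime_div_gcd_div_gcd hd)
    rwa [← pow_mul, Nat.mul_div_cancel' (Nat.gcd_dvd_left j N)] at h2
  have hMdvd : M ∣ N := Nat.div_dvd_of_dvd hdvdN
  set g := ZMod.unitsMap hMdvd with hg_def
  have hsur : Function.Surjective g := ZMod.unitsMap_surjective hMdvd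
  have step1 : ∀ u : (ZMod N)ˣ, (z ^ j) ^ ((u : ZMod N)).val
      = (z ^ j) ^ (((g u : ZMod M)).val) := by
    intro u
    have hval : ((g u : ZMod M)).val = ((u : ZMod N)).val % M := by
      show ((ZMod.castHom hMdvd (ZMod M)) (u : ZMod N)).val = _
      rw [ZMod.castHom_apply, ← ZMod.natCast_val, ZMod.val_natCast]
    rw [hval, hη.eq_orderOf, pow_mod_orderOf]
  rw [Finset.sum_congr rfl (fun u _ => step1 u)]
  rw [Finset.sum_comp (fun v : (ZMod M)ˣ => (z ^ j) ^ ((v : ZMod M)).val) g]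
  rw [Finset.image_univ_of_surjective hsur]
  have hcards : ∀ v : (ZMod M)ˣ, (Finset.univ.filter (fun u => g u = v)).card
      = N.totient / M.totient := by
    intro v
    rw [fiber_card g hsur v, ZMod.card_units_eq_totient, ZMod.card_units_eq_totient]
  rw [Finset.sum_congr rfl (fun v _ => by rw [hcards v])]
  rw [← Finset.smul_sum, sumUnits M (z ^ j) hη, nsmul_eq_mul]

lemma gcd_emod (k : ℤ) (N : ℕ) : Int.gcd (k % N) N = Int.gcd k N := by
  apply Nat.dvd_antisymm
  · refine Int.natCast_dvd_natCast.1 (Int.dvd_coe_gcd ?_ (Int.gcd_dvd_right _ _))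
    have h1 : (Int.gcd (k % N) N : ℤ) ∣ k % N := Int.gcd_dvd_left _ _
    have h2 : (Int.gcd (k % N) N : ℤ) ∣ (N : ℤ) := Int.gcd_dvd_right _ _
    have h3 : (Int.gcd (k % N) N : ℤ) ∣ (N : ℤ) * (k / N) + k % N :=
      dvd_add (h2.mul_right _) h1
    rwa [Int.mul_ediv_add_emod] at h3
  · refine Int.natCast_dvd_natCast.1 (Int.dvd_coe_gcd ?_ (Int.gcd_dvd_right _ _))
    have h1 : (Int.gcd k N : ℤ) ∣ k := Int.gcd_dvd_left _ _
    have h2 : (Int.gcd k N : ℤ) ∣ (N : ℤ) := Int.gcd_dvd_right _ _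
    have h3 : (Int.gcd k N : ℤ) ∣ k - (N : ℤ) * (k / N) := dvd_sub h1 (h2.mul_right _)
    rwa [← Int.emod_def] at h3

lemma ratio_eq (N : ℕ) (hN : 0 < N) (k : ℤ) :
    moebiusTotientRatioOf N k * (N.totient : ℚ)
      = ((N.totient / (N / Int.gcd k N).totient : ℕ) : ℚ)
        * ((μ (N / Int.gcd k N) : ℤ) : ℚ) := by
  have hg : 0 < Int.gcd k N := by
    rcases Nat.eq_zero_or_pos (Int.gcd k N) with h0 | h0
    · exact absurd ((Int.gcd_eq_zero_iff).1 h0).2 (by exact_mod_cast hN.ne')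
    · exact h0
  have hgdvd : Int.gcd k N ∣ N := Int.natCast_dvd_natCast.1 (Int.gcd_dvd_right _ _)
  have hM : 0 < N / Int.gcd k N := Nat.div_pos (Nat.le_of_dvd hN hgdvd) hg
  have hφM : ((N / Int.gcd k N).totient : ℚ) ≠ 0 :=
    Nat.cast_ne_zero.2 (Nat.totient_pos.2 hM).ne'
  have hφdvd : (N / Int.gcd k N).totient ∣ N.totient :=
    Nat.totient_dvd_of_dvd (Nat.div_dvd_of_dvd hgdvd)
  unfold moebiusTotientRatioOf
  rw [Nat.cast_div hφdvd hφM]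
  field_simp

theorem stmt_6 (N : ℕ) (hN : 0 < N) (ζ : ℂ)
    (hζ : ζ = Complex.exp (2 * Real.pi * Complex.I / N)) (a b : ℤ)
    (h : 1 + ζ ^ a + ζ ^ b + ζ ^ (2 * a + 3 * b) + ζ ^ (3 * a + 2 * b) +
      ζ ^ (3 * a + 3 * b) = 0) :
    1 + moebiusTotientRatioOf N a + moebiusTotientRatioOf N b +
      moebiusTotientRatioOf N (2 * a + 3 * b) + moebiusTotientRatioOf N (3 * a + 2 * b) +
      moebiusTotientRatioOf N (3 * a + 3 * b) = 0 := by
  haveI : NeZero N := ⟨hN.ne'⟩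
  have hζp : IsPrimitiveRoot ζ N := by
    rw [hζ]; exact Complex.isPrimitiveRoot_exp N hN.ne'
  have hz0 : ζ ≠ 0 := hζp.ne_zero hN.ne'
  set e : ℤ → ℕ := fun k => ((k : ZMod N)).val with he
  have h1 : ∀ k : ℤ, ((e k : ℕ) : ℤ) = k % N := fun k => ZMod.val_intCast k
  have hze : ∀ k : ℤ, ζ ^ k = ζ ^ (e k) := by
    intro k
    have hsp : ζ ^ k = ζ ^ (k % N) * (ζ ^ ((N : ℕ) : ℤ)) ^ (k / N) := by
      rw [← zpow_mul, ← zpow_add₀ hz0, Int.emod_add_mul_ediv]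
    rw [hsp, zpow_natCast, hζp.pow_eq_one, one_zpow, mul_one, ← h1 k, zpow_natCast]
  have hgcdk : ∀ k : ℤ, N / Nat.gcd (e k) N = N / Int.gcd k N := by
    intro k
    rw [← gcd_emod k N, ← h1 k, Int.gcd_natCast_natCast]
  -- the polynomial
  set P : Polynomial ℚ := 1 + X ^ (e a) + X ^ (e b) + X ^ (e (2*a+3*b)) + X ^ (e (3*a+2*b))
    + X ^ (e (3*a+3*b)) with hP
  have hPη : ∀ η : ℂ, (Polynomial.aeval η) P
      = 1 + η ^ (e a) + η ^ (e b) + η ^ (e (2*a+3*b)) + η ^ (e (3*a+2*b)) + η ^ (e (3*a+3*b)) := by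
    intro η; simp [hP]
  have hroot : (Polynomial.aeval ζ) P = 0 := by
    rw [hPη]
    rw [hze a, hze b, hze (2*a+3*b), hze (3*a+2*b), hze (3*a+3*b)] at h
    exact h
  have hdvd : minpoly ℚ ζ ∣ P := minpoly.dvd ℚ ζ hroot
  have hcyc : cyclotomic N ℚ = minpoly ℚ ζ := cyclotomic_eq_minpoly_rat hζp hN
  have hall : ∀ u : (ZMod N)ˣ,
      1 + (ζ ^ (e a)) ^ ((u : ZMod N)).val + (ζ ^ (e b)) ^ ((u : ZMod N)).val
      + (ζ ^ (e (2*a+3*b))) ^ ((u : ZMod N)).val + (ζ ^ (e (3*a+2*b))) ^ ((u : ZMod N)).val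
      + (ζ ^ (e (3*a+3*b))) ^ ((u : ZMod N)).val = 0 := by
    intro u
    have hup : IsPrimitiveRoot (ζ ^ ((u : ZMod N)).val) N :=
      hζp.pow_of_coprime _ (ZMod.val_coe_unit_coprime u)
    have h0 : (Polynomial.aeval (ζ ^ ((u : ZMod N)).val)) (cyclotomic N ℚ) = 0 := by
      have hr := hup.isRoot_cyclotomic hN
      rw [Polynomial.aeval_def, ← Polynomial.eval_map, map_cyclotomic]
      exact hr
    obtain ⟨Q, hQ⟩ := hdvd
    have hPz : (Polynomial.aeval (ζ ^ ((u : ZMod N)).val)) P = 0 := by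
      rw [hQ, map_mul, ← hcyc, h0, zero_mul]
    rw [hPη] at hPz
    simp only [← pow_mul, mul_comm ((u : ZMod N)).val] at hPz ⊢
    exact hPz
  have hsum : ∑ u : (ZMod N)ˣ, (1 + (ζ ^ (e a)) ^ ((u : ZMod N)).val
      + (ζ ^ (e b)) ^ ((u : ZMod N)).val + (ζ ^ (e (2*a+3*b))) ^ ((u : ZMod N)).val
      + (ζ ^ (e (3*a+2*b))) ^ ((u : ZMod N)).val
      + (ζ ^ (e (3*a+3*b))) ^ ((u : ZMod N)).val) = 0 :=
    Finset.sum_eq_zero fun u _ => hall u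
  simp only [Finset.sum_add_distrib, Finset.sum_const, Finset.card_univ, nsmul_eq_mul, mul_one,
    ZMod.card_units_eq_totient, sumPow N ζ hζp] at hsum
  rw [hgcdk a, hgcdk b, hgcdk (2*a+3*b), hgcdk (3*a+2*b), hgcdk (3*a+3*b)] at hsum
  -- transfer to ℚ
  have hQQ : ((N.totient : ℚ)
      + (((N.totient / (N / Int.gcd a N).totient : ℕ) : ℚ) * ((μ (N / Int.gcd a N) : ℤ) : ℚ))
      + (((N.totient / (N / Int.gcd b N).totient : ℕ) : ℚ) * ((μ (N / Int.gcd b N) : ℤ) : ℚ))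
      + (((N.totient / (N / Int.gcd (2*a+3*b) N).totient : ℕ) : ℚ) * ((μ (N / Int.gcd (2*a+3*b) N) : ℤ) : ℚ))
      + (((N.totient / (N / Int.gcd (3*a+2*b) N).totient : ℕ) : ℚ) * ((μ (N / Int.gcd (3*a+2*b) N) : ℤ) : ℚ))
      + (((N.totient / (N / Int.gcd (3*a+3*b) N).totient : ℕ) : ℚ) * ((μ (N / Int.gcd (3*a+3*b) N) : ℤ) : ℚ))) = 0 := by
    apply Rat.cast_injective (α := ℂ)
    push_cast
    exact_mod_cast hsum
  have hφN : (N.totient : ℚ) ≠ 0 := Nat.cast_ne_zero.2 (Nat.totient_pos.2 hN).ne'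
  have key : (1 + moebiusTotientRatioOf N a + moebiusTotientRatioOf N b +
      moebiusTotientRatioOf N (2 * a + 3 * b) + moebiusTotientRatioOf N (3 * a + 2 * b) +
      moebiusTotientRatioOf N (3 * a + 3 * b)) * (N.totient : ℚ) = 0 := by
    rw [add_mul, add_mul, add_mul, add_mul, add_mul, one_mul,
      ratio_eq N hN a, ratio_eq N hN b, ratio_eq N hN (2*a+3*b), ratio_eq N hN (3*a+2*b),
      ratio_eq N hN (3*a+3*b)]
    exact hQQ
  rcases mul_eq_zero.1 key with hk | hk
  · exact hk
  · exact absurd hk hφN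
end

section
/- Let f(x,y) = 1 + x + y + x²y³ + x³y² + x³y³. If x, y ∈ ℂ satisfy f(x,y) = 0 and there exists a positive integer N with x^N = 1 and y^N = 1, then x^210 = 1 and y^210 = 1. -/
/-- The polynomial f(x,y) = 1 + x + y + x²y³ + x³y² + x³y³. -/
def sharyginF (x y : ℂ) : ℂ :=
  1 + x + y + x ^ 2 * y ^ 3 + x ^ 3 * y ^ 2 + x ^ 3 * y ^ 3

private lemma hphi1 {x : ℂ} (h : x - 1 = 0) : x ^ 210 = 1 := by
  rw [sub_eq_zero] at h; rw [h]; norm_num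

private lemma hphi2 {x : ℂ} (h : x + 1 = 0) : x ^ 210 = 1 := by
  have hx : x = -1 := by linear_combination h
  rw [hx]; norm_num

private lemma hphi3 {x : ℂ} (h : x ^ 2 + x + 1 = 0) : x ^ 210 = 1 := by
  have h3 : x ^ 3 = 1 := by linear_combination (x - 1) * h
  calc x ^ 210 = (x ^ 3) ^ 70 := by ring
    _ = 1 := by rw [h3, one_pow]

private lemma hphi6 {x : ℂ} (h : x ^ 2 - x + 1 = 0) : x ^ 210 = 1 := by
  have h6 : x ^ 6 = 1 := by linear_combination (x ^ 4 + x ^ 3 - x - 1) * h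
  calc x ^ 210 = (x ^ 6) ^ 35 := by ring
    _ = 1 := by rw [h6, one_pow]

private lemma hphi7 {x : ℂ} (h : x ^ 6 + x ^ 5 + x ^ 4 + x ^ 3 + x ^ 2 + x + 1 = 0) :
    x ^ 210 = 1 := by
  have h7 : x ^ 7 = 1 := by linear_combination (x - 1) * h
  calc x ^ 210 = (x ^ 7) ^ 30 := by ring
    _ = 1 := by rw [h7, one_pow]

private lemma hphi14 {x : ℂ} (h : x ^ 6 - x ^ 5 + x ^ 4 - x ^ 3 + x ^ 2 - x + 1 = 0) :
    x ^ 210 = 1 := by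
  have h14 : x ^ 14 = 1 := by linear_combination ((x + 1) * (x ^ 7 - 1)) * h
  calc x ^ 210 = (x ^ 14) ^ 15 := by ring
    _ = 1 := by rw [h14, one_pow]

private lemma hphi15 {x : ℂ} (h : x ^ 8 - x ^ 7 + x ^ 5 - x ^ 4 + x ^ 3 - x + 1 = 0) :
    x ^ 210 = 1 := by
  have h15 : x ^ 15 = 1 := by
    linear_combination ((x - 1) * (x ^ 2 + x + 1) * (x ^ 4 + x ^ 3 + x ^ 2 + x + 1)) * h
  calc x ^ 210 = (x ^ 15) ^ 14 := by ring
    _ = 1 := by rw [h15, one_pow]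

open IsCyclotomicExtension Polynomial in
lemma master {x y : ℂ} (n : ℕ+) (hx : x ^ (n:ℕ) = 1) (hy : y ^ (n:ℕ) = 1)
    (hf : sharyginF x y = 0) {c : ℕ} (hc : Nat.Coprime c n) :
    sharyginF (x ^ c) (y ^ c) = 0 := by
  set L := CyclotomicField n ℚ with hL
  have hirr : Irreducible (cyclotomic (n : ℕ) ℚ) := cyclotomic.irreducible_rat n.pos
  haveI : NeZero (n:ℕ) := ⟨n.pos.ne'⟩
  haveI : NeZero ((n:ℕ) : ℚ) := ⟨by exact_mod_cast n.pos.ne'⟩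
  haveI : IsCyclotomicExtension {(n:ℕ)} ℚ L := CyclotomicField.isCyclotomicExtension (n:ℕ) ℚ
  haveI : FiniteDimensional ℚ L := IsCyclotomicExtension.finiteDimensional {(n:ℕ)} ℚ L
  haveI : Algebra.IsAlgebraic ℚ L := Algebra.IsAlgebraic.of_finite ℚ L
  let φ : L →ₐ[ℚ] ℂ := IsAlgClosed.lift
  have hφ : Function.Injective φ := φ.toRingHom.injective
  set ζK := zeta n ℚ L with hζKdef
  have hζK : IsPrimitiveRoot ζK n := zeta_spec n ℚ L
  have hζ : IsPrimitiveRoot (φ ζK) (n : ℕ) := hζK.map_of_injective hφ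
  haveI : NeZero (n:ℕ) := ⟨n.pos.ne'⟩
  obtain ⟨a, -, ha⟩ := hζ.eq_pow_of_pow_eq_one hx
  obtain ⟨b, -, hb⟩ := hζ.eq_pow_of_pow_eq_one hy
  have hK : (1 + ζK^a + ζK^b + (ζK^a)^2*(ζK^b)^3 + (ζK^a)^3*(ζK^b)^2
      + (ζK^a)^3*(ζK^b)^3 : L) = 0 := by
    apply hφ
    rw [map_zero]
    simp only [map_add, map_mul, map_pow, map_one, ha, hb]
    simpa [sharyginF] using hf
  let σ : L ≃ₐ[ℚ] L := fromZetaAut (hζK.pow_of_coprime c hc) hirr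
  have hσ : σ ζK = ζK ^ c := fromZetaAut_spec (hζK.pow_of_coprime c hc) hirr
  have hK2 := congrArg σ hK
  simp only [map_add, map_mul, map_pow, map_one, map_zero, hσ] at hK2
  have hK3 := congrArg φ hK2
  simp only [map_add, map_mul, map_pow, map_one, map_zero] at hK3
  have hxc : (φ ζK) ^ (c * a) = x ^ c := by rw [pow_mul, ← ha]; ring
  have hyc : (φ ζK) ^ (c * b) = y ^ c := by rw [pow_mul, ← hb]; ring
  rw [← ha, ← hb]
  simp only [sharyginF]
  rw [pow_right_comm _ a c, pow_right_comm _ b c]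
  exact hK3
private lemma case_sq11 {x y : ℂ} (hx0 : x ≠ 0) (hf : sharyginF x y = 0)
    (hg : sharyginF (x ^ 2) (y ^ 2) = 0) : x ^ 210 = 1 := by
  simp only [sharyginF] at hf hg
  have key : ((8 : ℂ)) * (x ^ 8 * ((x ^ 2 + x + 1) ^ 5 * (x ^ 2 - x + 1) * (x ^ 8 - x ^ 7 + x ^ 5 - x ^ 4 + x ^ 3 - x + 1))) = 0 := by
    linear_combination (((4) * x ^ 8 + (12) * x ^ 9 + (28) * x ^ 10 + (44) * x ^ 11 + (64) * x ^ 12 + (80) * x ^ 13 + (92) * x ^ 14 + (88) * x ^ 15 + (72) * x ^ 16 + (48) * x ^ 17 + (32) * x ^ 18 + (16) * x ^ 19 + (8) * x ^ 20 + (-4) * x ^ 21 + (8) * x ^ 23 + (20) * x ^ 24 + (20) * x ^ 25 + (12) * x ^ 26 + (4) * x ^ 27) + ((-4) * x ^ 8 + (-8) * x ^ 9 + (-16) * x ^ 10 + (-16) * x ^ 11 + (-16) * x ^ 12 + (-8) * x ^ 13 + (4) * x ^ 14 + (20) * x ^ 15 + (40) * x ^ 16 + (48) * x ^ 17 + (52)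 * x ^ 18 + (44) * x ^ 19 + (36) * x ^ 20 + (20) * x ^ 21 + (-20) * x ^ 23 + (-28) * x ^ 24 + (-24) * x ^ 25 + (-12) * x ^ 26 + (-4) * x ^ 27) * y + ((-4) * x ^ 12 + (-12) * x ^ 13 + (-24) * x ^ 14 + (-32) * x ^ 15 + (-32) * x ^ 16 + (-28) * x ^ 17 + (-20) * x ^ 18 + (-16) * x ^ 19 + (-4) * x ^ 20 + (8) * x ^ 21 + (24) * x ^ 22 + (28) * x ^ 23 + (24) * x ^ 24 + (8) * x ^ 25 + (-4) * x ^ 26 + (-12) * x ^ 27 + (-8) * x ^ 28 + (-4) * x ^ 29) * y ^ 2 + ((-8) * x ^ 14 + (-20) * x ^ 15 + (-40) * x ^ 16 + (-48) * x ^ 17 + (-52) * x ^ 18 + (-48) * x ^ 19 + (-48) * x ^ 20 + (-52) * x ^ 21 + (-48) * x ^ 22 + (-40) * x ^ 23 + (-20) * x ^ 24 + (-8) * x ^ 25) * y ^ 3 + ((4) * x ^ 12 + (12) * x ^ 13 + (28) * x ^ 14 + (44) * x ^ 15 + (56) * x ^ 16 + (60) * x ^ 17 + (52) * x ^ 18 +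 (44) * x ^ 19 + (28) * x ^ 20 + (16) * x ^ 21 + (-16) * x ^ 23 + (-24) * x ^ 24 + (-32) * x ^ 25 + (-24) * x ^ 26 + (-20) * x ^ 27 + (-8) * x ^ 28 + (-4) * x ^ 29) * y ^ 4 + ((-4) * x ^ 12 + (-8) * x ^ 13 + (-16) * x ^ 14 + (-12) * x ^ 15 + (-4) * x ^ 16 + (20) * x ^ 17 + (40) * x ^ 18 + (60) * x ^ 19 + (68) * x ^ 20 + (72) * x ^ 21 + (68) * x ^ 22 + (60) * x ^ 23 + (44) * x ^ 24 + (28) * x ^ 25 + (12) * x ^ 26 + (4) * x ^ 27) * y ^ 5) * hf + (((4) * x ^ 8 + (8) * x ^ 9 + (12) * x ^ 10 + (-16) * x ^ 12 + (-32) * x ^ 13 + (-28) * x ^ 14 + (-12) * x ^ 15 + (4) * x ^ 16 + (20) * x ^ 17 + (36) * x ^ 18 + (60) * x ^ 19 + (76) * x ^ 20 + (72) * x ^ 21 + (56) * x ^ 22 + (32) * x ^ 23 + (20) * x ^ 24 + (8) * x ^ 25 + (4) * x ^ 26) + ((-4) * x ^ 10 + (-12) * x ^ 11 + (-28) * x ^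 12 + (-44) * x ^ 13 + (-60) * x ^ 14 + (-68) * x ^ 15 + (-72) * x ^ 16 + (-68) * x ^ 17 + (-60) * x ^ 18 + (-44) * x ^ 19 + (-28) * x ^ 20 + (-8) * x ^ 21 + (8) * x ^ 22 + (20) * x ^ 23 + (20) * x ^ 24 + (12) * x ^ 25 + (4) * x ^ 26) * y + ((4) * x ^ 10 + (12) * x ^ 11 + (20) * x ^ 12 + (16) * x ^ 13 + (-4) * x ^ 14 + (-32) * x ^ 15 + (-56) * x ^ 16 + (-68) * x ^ 17 + (-72) * x ^ 18 + (-72) * x ^ 19 + (-68) * x ^ 20 + (-56) * x ^ 21 + (-36) * x ^ 22 + (-16) * x ^ 23 + (-4) * x ^ 24) * y ^ 2) * hg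
  rcases mul_eq_zero.mp key with h1 | h1
  · norm_num at h1
  rcases mul_eq_zero.mp h1 with h1 | h1
  · exact absurd h1 (pow_ne_zero _ hx0)
  rcases mul_eq_zero.mp h1 with h1 | h1
  ·
    rcases mul_eq_zero.mp h1 with h1 | h1
    ·
      exact hphi3 ((pow_eq_zero_iff (by norm_num)).mp h1)
    ·
      exact hphi6 h1
  ·
    exact hphi15 h1

private lemma case_sq1m {x y : ℂ} (hx0 : x ≠ 0) (hf : sharyginF x y = 0)
    (hg : sharyginF (x ^ 2) (-y ^ 2) = 0) : x ^ 210 = 1 := by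
  simp only [sharyginF] at hf hg
  have key : ((8 : ℂ)) * (x ^ 9 * ((x - 1) ^ 3 * (x + 1) * (x ^ 2 + x + 1) ^ 3 * (x ^ 2 - x + 1) * (x ^ 6 + x ^ 5 + x ^ 4 + x ^ 3 + x ^ 2 + x + 1))) = 0 := by
    linear_combination (((-4) * x ^ 8 + (-12) * x ^ 9 + (-20) * x ^ 10 + (-28) * x ^ 11 + (-36) * x ^ 12 + (-56) * x ^ 13 + (-68) * x ^ 14 + (-76) * x ^ 15 + (-68) * x ^ 16 + (-68) * x ^ 17 + (-64) * x ^ 18 + (-52) * x ^ 19 + (-32) * x ^ 20 + (-12) * x ^ 21 + (-8) * x ^ 22 + (-4) * x ^ 23 + (4) * x ^ 25 + (4) * x ^ 26) + ((4) * x ^ 8 + (8) * x ^ 9 + (16) * x ^ 10 + (24) * x ^ 11 + (40) * x ^ 12 + (56) * x ^ 13 + (68) * x ^ 14 + (68) * x ^ 15 + (72) * x ^ 16 + (68) * x ^ 17 + (68) * x ^ 18 + (48) * x ^ 19 + (32) * x ^ 20 + (20) * x ^ 21 + (12) * x ^ 22 + (8) * x ^ 23 + (-4) * x ^ 24 + (-4)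 * x ^ 25 + (-4) * x ^ 26) * y + ((-4) * x ^ 12 + (-12) * x ^ 13 + (-24) * x ^ 14 + (-32) * x ^ 15 + (-40) * x ^ 16 + (-48) * x ^ 17 + (-48) * x ^ 18 + (-44) * x ^ 19 + (-24) * x ^ 20 + (-20) * x ^ 21 + (-8) * x ^ 22 + (-4) * x ^ 23 + (4) * x ^ 24 + (8) * x ^ 25 + (-4) * x ^ 28) * y ^ 2 + ((4) * x ^ 12 + (12) * x ^ 13 + (20) * x ^ 14 + (32) * x ^ 15 + (36) * x ^ 16 + (48) * x ^ 17 + (44) * x ^ 18 + (40) * x ^ 19 + (32) * x ^ 20 + (20) * x ^ 21 + (16) * x ^ 22 + (-4) * x ^ 25) * y ^ 3 + ((-4) * x ^ 12 + (-12) * x ^ 13 + (-24) * x ^ 14 + (-36) * x ^ 15 + (-48) * x ^ 16 + (-60) * x ^ 17 + (-72) * x ^ 18 + (-76) * x ^ 19 + (-76) * x ^ 20 + (-64) * x ^ 21 + (-52) * x ^ 22 + (-40) * x ^ 23 + (-24) * x ^ 24 + (-16) * x ^ 25 + (4) * x ^ 28) * y ^ 4 + ((4) * x ^ 12 + (8)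 * x ^ 13 + (20) * x ^ 14 + (28) * x ^ 15 + (48) * x ^ 16 + (60) * x ^ 17 + (76) * x ^ 18 + (80) * x ^ 19 + (76) * x ^ 20 + (68) * x ^ 21 + (52) * x ^ 22 + (40) * x ^ 23 + (24) * x ^ 24 + (12) * x ^ 25 + (4) * x ^ 26) * y ^ 5) * hf + (((4) * x ^ 8 + (8) * x ^ 9 + (20) * x ^ 10 + (32) * x ^ 11 + (52) * x ^ 12 + (68) * x ^ 13 + (80) * x ^ 14 + (84) * x ^ 15 + (80) * x ^ 16 + (68) * x ^ 17 + (52) * x ^ 18 + (32) * x ^ 19 + (16) * x ^ 20 + (4) * x ^ 21 + (-4) * x ^ 22 + (4) * x ^ 25) + ((-4) * x ^ 10 + (-12) * x ^ 11 + (-24) * x ^ 12 + (-28) * x ^ 13 + (-32) * x ^ 14 + (-32) * x ^ 15 + (-40) * x ^ 16 + (-40) * x ^ 17 + (-32) * x ^ 18 + (-24) * x ^ 19 + (-16) * x ^ 20 + (-16) * x ^ 21 + (-8) * x ^ 22 + (4) * x ^ 24 + (4) * x ^ 25) * y + ((4) * x ^ 10 + (12) * x ^ 11 + (24) * x ^ 12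 + (36) * x ^ 13 + (52) * x ^ 14 + (72) * x ^ 15 + (84) * x ^ 16 + (84) * x ^ 17 + (72) * x ^ 18 + (60) * x ^ 19 + (48) * x ^ 20 + (32) * x ^ 21 + (16) * x ^ 22 + (4) * x ^ 23) * y ^ 2) * hg
  rcases mul_eq_zero.mp key with h1 | h1
  · norm_num at h1
  rcases mul_eq_zero.mp h1 with h1 | h1
  · exact absurd h1 (pow_ne_zero _ hx0)
  rcases mul_eq_zero.mp h1 with h1 | h1
  ·
    rcases mul_eq_zero.mp h1 with h1 | h1
    ·
      rcases mul_eq_zero.mp h1 with h1 | h1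
      ·
        rcases mul_eq_zero.mp h1 with h1 | h1
        ·
          exact hphi1 ((pow_eq_zero_iff (by norm_num)).mp h1)
        ·
          exact hphi2 h1
      ·
        exact hphi3 ((pow_eq_zero_iff (by norm_num)).mp h1)
    ·
      exact hphi6 h1
  ·
    exact hphi7 h1

private lemma case_sqm1 {x y : ℂ} (hx0 : x ≠ 0) (hf : sharyginF x y = 0)
    (hg : sharyginF (-x ^ 2) (y ^ 2) = 0) : x ^ 210 = 1 := by
  simp only [sharyginF] at hf hg
  have key : ((-8 : ℂ)) * (x ^ 8 * ((x - 1) * (x + 1) ^ 5 * (x ^ 2 + x + 1) ^ 2 * (x ^ 2 - x + 1) ^ 2 * (x ^ 6 - x ^ 5 + x ^ 4 - x ^ 3 + x ^ 2 - x + 1))) = 0 := by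
    linear_combination (((4) * x ^ 8 + (12) * x ^ 9 + (20) * x ^ 10 + (28) * x ^ 11 + (24) * x ^ 12 + (4) * x ^ 13 + (-12) * x ^ 14 + (-8) * x ^ 15 + (4) * x ^ 16 + (4) * x ^ 17 + (4) * x ^ 18 + (8) * x ^ 19 + (-4) * x ^ 20 + (-24) * x ^ 21 + (-24) * x ^ 22 + (-8) * x ^ 23 + (-4) * x ^ 24 + (-12) * x ^ 25 + (-12) * x ^ 26 + (-4) * x ^ 27) + ((-4) * x ^ 8 + (-8) * x ^ 9 + (-8) * x ^ 10 + (-8) * x ^ 11 + (12) * x ^ 13 + (12) * x ^ 14 + (-8) * x ^ 15 + (-24) * x ^ 16 + (-12) * x ^ 17 + (4) * x ^ 20 + (12) * x ^ 21 + (8) * x ^ 22 + (-4) * x ^ 23 + (12) * x ^ 25 + (12) * x ^ 26 + (4) * x ^ 27) * y + ((-4) * x ^ 12 + (-12) * x ^ 13 + (-12) * x ^ 14 + (8) * x ^ 16 + (-4) * x ^ 17 + (-16) * x ^ 18 + (-8) * x ^ 19 + (-4) * x ^ 21 + (-8) * x ^ 22 + (4) * x ^ 24 + (-4) * x ^ 25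 + (-4) * x ^ 26 + (4) * x ^ 27 + (8) * x ^ 28 + (4) * x ^ 29) * y ^ 2 + ((-4) * x ^ 15 + (-4) * x ^ 16 + (8) * x ^ 17 + (16) * x ^ 18 + (8) * x ^ 19 + (-8) * x ^ 20 + (-8) * x ^ 21 + (4) * x ^ 22 + (8) * x ^ 23 + (8) * x ^ 24 + (8) * x ^ 25 + (8) * x ^ 26 + (4) * x ^ 27) * y ^ 3 + ((4) * x ^ 12 + (12) * x ^ 13 + (12) * x ^ 14 + (4) * x ^ 15 + (-4) * x ^ 16 + (-12) * x ^ 17 + (-16) * x ^ 18 + (-8) * x ^ 19 + (12) * x ^ 20 + (16) * x ^ 21 + (-4) * x ^ 22 + (-16) * x ^ 23 + (-12) * x ^ 24 + (-4) * x ^ 25 + (4) * x ^ 27 + (8) * x ^ 28 + (4) * x ^ 29) * y ^ 4 + ((-4) * x ^ 12 + (-8) * x ^ 13 + (12) * x ^ 15 + (12) * x ^ 16 + (-8) * x ^ 18 + (-12) * x ^ 19 + (-20) * x ^ 20 + (-12) * x ^ 21 + (12) * x ^ 22 + (24) * x ^ 23 + (12) * x ^ 24 + (-4) * x ^ 25 +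 (-4) * x ^ 26) * y ^ 5) * hf + (((4) * x ^ 8 + (8) * x ^ 9 + (4) * x ^ 10 + (-8) * x ^ 11 + (-16) * x ^ 12 + (-4) * x ^ 13 + (8) * x ^ 14 + (8) * x ^ 15 + (4) * x ^ 16 + (-4) * x ^ 18 + (-12) * x ^ 19 + (24) * x ^ 21 + (32) * x ^ 22 + (24) * x ^ 23 + (12) * x ^ 24 + (8) * x ^ 25 + (4) * x ^ 26) + ((-4) * x ^ 10 + (-12) * x ^ 11 + (-20) * x ^ 12 + (-28) * x ^ 13 + (-32) * x ^ 14 + (-24) * x ^ 15 + (-4) * x ^ 16 + (8) * x ^ 17 + (4) * x ^ 18 + (4) * x ^ 20 + (8) * x ^ 21 + (8) * x ^ 22 + (12) * x ^ 23 + (16) * x ^ 24 + (12) * x ^ 25 + (4) * x ^ 26) * y + ((4) * x ^ 10 + (12) * x ^ 11 + (12) * x ^ 12 + (-12) * x ^ 14 + (-12) * x ^ 15 + (-4) * x ^ 16 + (8) * x ^ 17 + (28) * x ^ 18 + (40) * x ^ 19 + (28) * x ^ 20 + (4) * x ^ 21 + (-8) * x ^ 22 + (-4) * x ^ 23) * y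 ^ 2) * hg
  rcases mul_eq_zero.mp key with h1 | h1
  · norm_num at h1
  rcases mul_eq_zero.mp h1 with h1 | h1
  · exact absurd h1 (pow_ne_zero _ hx0)
  rcases mul_eq_zero.mp h1 with h1 | h1
  ·
    rcases mul_eq_zero.mp h1 with h1 | h1
    ·
      rcases mul_eq_zero.mp h1 with h1 | h1
      ·
        rcases mul_eq_zero.mp h1 with h1 | h1
        ·
          exact hphi1 h1
        ·
          exact hphi2 ((pow_eq_zero_iff (by norm_num)).mp h1)
      ·
        exact hphi3 ((pow_eq_zero_iff (by norm_num)).mp h1)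
    ·
      exact hphi6 ((pow_eq_zero_iff (by norm_num)).mp h1)
  ·
    exact hphi14 h1

private lemma case_lin1m {x y : ℂ} (hx0 : x ≠ 0) (hf : sharyginF x y = 0)
    (hg : sharyginF x (-y) = 0) : x ^ 210 = 1 := by
  simp only [sharyginF] at hf hg
  have key : ((8 : ℂ)) * (x ^ 6 * ((x + 1) ^ 2 * (x ^ 2 + x + 1) ^ 2)) = 0 := by
    linear_combination (((4) * x ^ 6 + (12) * x ^ 7 + (20) * x ^ 8 + (20) * x ^ 9 + (12) * x ^ 10 + (4) * x ^ 11) + ((4) * x ^ 10 + (8) * x ^ 11 + (8) * x ^ 12 + (4) * x ^ 13) * y + ((-4) * x ^ 9 + (-12) * x ^ 10 + (-16) * x ^ 11 + (-12) * x ^ 12 + (-4) * x ^ 13) * y ^ 2) * hf + (((4) * x ^ 6 + (12) * x ^ 7 + (20) * x ^ 8 + (20) * x ^ 9 + (12) * x ^ 10 + (4) * x ^ 11) + ((-4) * x ^ 10 + (-8) * x ^ 11 + (-8) * x ^ 12 + (-4) * x ^ 13) * y + ((-4) * x ^ 9 + (-12) * x ^ 10 + (-16) * x ^ 11 + (-12)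 * x ^ 12 + (-4) * x ^ 13) * y ^ 2) * hg
  rcases mul_eq_zero.mp key with h1 | h1
  · norm_num at h1
  rcases mul_eq_zero.mp h1 with h1 | h1
  · exact absurd h1 (pow_ne_zero _ hx0)
  rcases mul_eq_zero.mp h1 with h1 | h1
  ·
    exact hphi2 ((pow_eq_zero_iff (by norm_num)).mp h1)
  ·
    exact hphi3 ((pow_eq_zero_iff (by norm_num)).mp h1)

private lemma case_linm1 {x y : ℂ} (hx0 : x ≠ 0) (hf : sharyginF x y = 0)
    (hg : sharyginF (-x) y = 0) : x ^ 210 = 1 := by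
  simp only [sharyginF] at hf hg
  have key : ((-8 : ℂ)) * (x ^ 7 * ((x ^ 2 + x + 1) * (x ^ 2 - x + 1))) = 0 := by
    linear_combination (((-4) * x ^ 6 + (-4) * x ^ 9 + (-4) * x ^ 11) + ((4) * x ^ 9 + (4) * x ^ 10) * y + ((-4) * x ^ 8 + (4) * x ^ 9 + (-4) * x ^ 10 + (4) * x ^ 11) * y ^ 2) * hf + (((4) * x ^ 6 + (-4) * x ^ 9 + (-4) * x ^ 11) + ((4) * x ^ 9 + (-4) * x ^ 10) * y + ((4) * x ^ 8 + (4) * x ^ 9 + (4) * x ^ 10 + (4) * x ^ 11) * y ^ 2) * hg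
  rcases mul_eq_zero.mp key with h1 | h1
  · norm_num at h1
  rcases mul_eq_zero.mp h1 with h1 | h1
  · exact absurd h1 (pow_ne_zero _ hx0)
  rcases mul_eq_zero.mp h1 with h1 | h1
  ·
    exact hphi3 h1
  ·
    exact hphi6 h1

private lemma case_linmm {x y : ℂ} (hx0 : x ≠ 0) (hf : sharyginF x y = 0)
    (hg : sharyginF (-x) (-y) = 0) : x ^ 210 = 1 := by
  simp only [sharyginF] at hf hg
  have key : ((-16 : ℂ)) * (x ^ 6 * ((x - 1) * (x + 1) * (x ^ 2 + x + 1) * (x ^ 2 - x + 1))) = 0 := by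
    linear_combination (((8) * x ^ 6 + (-4) * x ^ 7 + (4) * x ^ 8 + (4) * x ^ 9 + (-4) * x ^ 10 + (-4) * x ^ 11 + (-4) * x ^ 12) + ((4) * x ^ 7 + (-4) * x ^ 8 + (4) * x ^ 10 + (4) * x ^ 12 + (-4) * x ^ 13) * y + ((4) * x ^ 8 + (-4) * x ^ 9 + (4) * x ^ 10 + (-4) * x ^ 11 + (-4) * x ^ 12 + (4) * x ^ 13) * y ^ 2) * hf + (((8) * x ^ 6 + (4) * x ^ 7 + (4) * x ^ 8 + (-4) * x ^ 9 + (-4) * x ^ 10 + (4) * x ^ 11 + (-4) * x ^ 12) + ((4) * x ^ 7 + (4) * x ^ 8 + (-4) * x ^ 10 + (-4) * x ^ 12 + (-4) * x ^ 13) * y + ((4) * x ^ 8 + (4) * x ^ 9 + (4) * x ^ 10 + (4) * x ^ 11 + (-4) * x ^ 12 + (-4) * x ^ 13) * y ^ 2) * hg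
  rcases mul_eq_zero.mp key with h1 | h1
  · norm_num at h1
  rcases mul_eq_zero.mp h1 with h1 | h1
  · exact absurd h1 (pow_ne_zero _ hx0)
  rcases mul_eq_zero.mp h1 with h1 | h1
  ·
    rcases mul_eq_zero.mp h1 with h1 | h1
    ·
      rcases mul_eq_zero.mp h1 with h1 | h1
      ·
        exact hphi1 h1
      ·
        exact hphi2 h1
    ·
      exact hphi3 h1
  ·
    exact hphi6 h1

private lemma case_sqmm {x y : ℂ} (hx0 : x ≠ 0) (hf : sharyginF x y = 0)
    (hg : sharyginF (-x ^ 2) (-y ^ 2) = 0) (hq : sharyginF (-x ^ 4) (-y ^ 4) = 0) :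
    x = -1 := by
  simp only [sharyginF] at hf hg hq
  have k1 : ((-8 : ℂ)) * (x ^ 9 * ((x + 1) ^ 2 * ((1) + (4) * x ^ 3 + (2) * x ^ 4 + (-4) * x ^ 7 + (-5) * x ^ 8 + (-4) * x ^ 9 + (2) * x ^ 12 + (4) * x ^ 13 + (1) * x ^ 16))) = 0 := by
    linear_combination (((-4) * x ^ 8 + (-12) * x ^ 9 + (-12) * x ^ 10 + (-12) * x ^ 11 + (-20) * x ^ 12 + (-12) * x ^ 13 + (4) * x ^ 14 + (12) * x ^ 15 + (32) * x ^ 16 + (52) * x ^ 17 + (32) * x ^ 18 + (-4) * x ^ 19 + (-4) * x ^ 20 + (-8) * x ^ 21 + (-28) * x ^ 22 + (-16) * x ^ 23 + (-4) * x ^ 24 + (-8) * x ^ 25 + (-4) * x ^ 26) + ((4) * x ^ 8 + (8) * x ^ 9 + (8) * x ^ 10 + (16) * x ^ 11 + (16) * x ^ 12 + (-4) * x ^ 13 + (-12) * x ^ 14 + (-8) * x ^ 15 + (-20) * x ^ 16 + (-28) * x ^ 17 + (-8) * x ^ 18 + (-8) * x ^ 19 + (-16) * x ^ 20 + (12) *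 x ^ 21 + (24) * x ^ 22 + (8) * x ^ 23 + (4) * x ^ 24 + (8) * x ^ 25 + (4) * x ^ 26) * y + ((-4) * x ^ 12 + (-12) * x ^ 13 + (-8) * x ^ 14 + (12) * x ^ 15 + (20) * x ^ 16 + (-16) * x ^ 18 + (-16) * x ^ 19 + (-24) * x ^ 20 + (-16) * x ^ 21 + (8) * x ^ 22 + (16) * x ^ 23 + (20) * x ^ 24 + (12) * x ^ 25 + (4) * x ^ 27 + (4) * x ^ 28) * y ^ 2 + ((4) * x ^ 12 + (12) * x ^ 13 + (8) * x ^ 14 + (-8) * x ^ 15 + (-8) * x ^ 16 + (-4) * x ^ 17 + (-20) * x ^ 18 + (-16) * x ^ 19 + (8) * x ^ 20 + (12) * x ^ 21 + (12) * x ^ 22 + (8) * x ^ 23 + (4) * x ^ 24 + (8) * x ^ 25 + (4) * x ^ 26) * y ^ 3 + ((-4) * x ^ 12 + (-12) * x ^ 13 + (-8) * x ^ 14 + (4) * x ^ 15 + (4) * x ^ 16 + (8) * x ^ 17 + (16) * x ^ 18 + (8) * x ^ 19 + (-8) * x ^ 23 + (-12) * x ^ 24 + (4) * x ^ 25 + (8)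 * x ^ 26 + (-4) * x ^ 27 + (-4) * x ^ 28) * y ^ 4 + ((4) * x ^ 12 + (8) * x ^ 13 + (4) * x ^ 14 + (4) * x ^ 15 + (-4) * x ^ 16 + (-28) * x ^ 17 + (-28) * x ^ 18 + (-4) * x ^ 19 + (20) * x ^ 20 + (28) * x ^ 21 + (20) * x ^ 22 + (12) * x ^ 23 + (-8) * x ^ 24 + (-20) * x ^ 25 + (-8) * x ^ 26) * y ^ 5) * hf + (((4) * x ^ 8 + (8) * x ^ 9 + (12) * x ^ 10 + (24) * x ^ 11 + (12) * x ^ 12 + (-24) * x ^ 13 + (-44) * x ^ 14 + (-56) * x ^ 15 + (-56) * x ^ 16 + (-36) * x ^ 17 + (4) * x ^ 18 + (40) * x ^ 19 + (44) * x ^ 20 + (36) * x ^ 21 + (16) * x ^ 22 + (4) * x ^ 24 + (4) * x ^ 25) + ((-4) * x ^ 10 + (-12) * x ^ 11 + (-16) * x ^ 12 + (-12) * x ^ 13 + (-4) * x ^ 14 + (-4) * x ^ 15 + (-8) * x ^ 16 + (-8) * x ^ 17 + (-4) * x ^ 18 + (12) * x ^ 19 + (24) * x ^ 20 + (24) * x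 ^ 21 + (16) * x ^ 22 + (8) * x ^ 23 + (8) * x ^ 24 + (4) * x ^ 25) * y + ((4) * x ^ 10 + (12) * x ^ 11 + (16) * x ^ 12 + (20) * x ^ 13 + (16) * x ^ 14 + (-12) * x ^ 15 + (-40) * x ^ 16 + (-44) * x ^ 17 + (-24) * x ^ 18 + (4) * x ^ 19 + (24) * x ^ 20 + (36) * x ^ 21 + (28) * x ^ 22 + (8) * x ^ 23) * y ^ 2) * hg
  have k2 : ((-8 : ℂ)) * (x ^ 17 * ((x + 1) ^ 2 * ((2) + (5) * x + (10) * x ^ 2 + (-1) * x ^ 3 + (-6) * x ^ 4 + (-8) * x ^ 5 + (20) * x ^ 6 + (58) * x ^ 7 + (52) * x ^ 8 + (24) * x ^ 9 + (-32) * x ^ 10 + (-18) * x ^ 11 + (36) * x ^ 12 + (110) * x ^ 13 + (136) * x ^ 14 + (82) * x ^ 15 + (14) * x ^ 16 + (-57) * x ^ 17 + (-70) * x ^ 18 + (-57) * x ^ 19 + (14) * x ^ 20 + (82) * x ^ 21 + (136) * x ^ 22 + (110) * x ^ 23 + (36) * x ^ 24 + (-18) * x ^ 25 + (-32) * x ^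 26 + (24) * x ^ 27 + (52) * x ^ 28 + (58) * x ^ 29 + (20) * x ^ 30 + (-8) * x ^ 31 + (-6) * x ^ 32 + (-1) * x ^ 33 + (10) * x ^ 34 + (5) * x ^ 35 + (2) * x ^ 36))) = 0 := by
    linear_combination (((-4) * x ^ 16 + (-28) * x ^ 17 + (-92) * x ^ 18 + (-176) * x ^ 19 + (-180) * x ^ 20 + (-68) * x ^ 21 + (20) * x ^ 22 + (-136) * x ^ 23 + (-572) * x ^ 24 + (-912) * x ^ 25 + (-748) * x ^ 26 + (-168) * x ^ 27 + (204) * x ^ 28 + (-120) * x ^ 29 + (-940) * x ^ 30 + (-1496) * x ^ 31 + (-1152) * x ^ 32 + (-188) * x ^ 33 + (596) * x ^ 34 + (576) * x ^ 35 + (-176) * x ^ 36 + (-1100) * x ^ 37 + (-1732) * x ^ 38 + (-1736) * x ^ 39 + (-1124) * x ^ 40 + (-200) * x ^ 41 + (472) * x ^ 42 + (464) * x ^ 43 + (-68) * x ^ 44 + (-632) * x ^ 45 + (-752) * x ^ 46 + (-400) * x ^ 47 + (20) * x ^ 48 + (164) * x ^ 49 + (56) * x ^ 50 + (-72) * x ^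 51 + (-92) * x ^ 52 + (-44) * x ^ 53 + (-8) * x ^ 54) + ((4) * x ^ 16 + (24) * x ^ 17 + (72) * x ^ 18 + (124) * x ^ 19 + (116) * x ^ 20 + (48) * x ^ 21 + (8) * x ^ 22 + (92) * x ^ 23 + (312) * x ^ 24 + (468) * x ^ 25 + (424) * x ^ 26 + (244) * x ^ 27 + (16) * x ^ 28 + (-132) * x ^ 29 + (-216) * x ^ 30 + (-212) * x ^ 31 + (-36) * x ^ 32 + (300) * x ^ 33 + (632) * x ^ 34 + (612) * x ^ 35 + (260) * x ^ 36 + (-60) * x ^ 37 + (8) * x ^ 38 + (380) * x ^ 39 + (576) * x ^ 40 + (372) * x ^ 41 + (-96) * x ^ 43 + (192) * x ^ 44 + (572) * x ^ 45 + (640) * x ^ 46 + (344) * x ^ 47 + (20) * x ^ 48 + (-96) * x ^ 49 + (-16) * x ^ 50 + (88) * x ^ 51 + (108) * x ^ 52 + (64) * x ^ 53 + (16) * x ^ 54) * y + ((-4) * x ^ 16 + (-20) * x ^ 17 + (-56) * x ^ 18 + (-84) * x ^ 19 + (-64) * x ^ 20 + (-4) * x ^ 21 + (16) * x ^ 22 +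 (-116) * x ^ 23 + (-328) * x ^ 24 + (-396) * x ^ 25 + (-164) * x ^ 26 + (240) * x ^ 27 + (452) * x ^ 28 + (280) * x ^ 29 + (-64) * x ^ 30 + (-156) * x ^ 31 + (100) * x ^ 32 + (432) * x ^ 33 + (412) * x ^ 34 + (-12) * x ^ 35 + (-416) * x ^ 36 + (-436) * x ^ 37 + (16) * x ^ 38 + (584) * x ^ 39 + (936) * x ^ 40 + (876) * x ^ 41 + (452) * x ^ 42 + (-32) * x ^ 43 + (-328) * x ^ 44 + (-224) * x ^ 45 + (144) * x ^ 46 + (452) * x ^ 47 + (476) * x ^ 48 + (236) * x ^ 49 + (-32) * x ^ 50 + (-132) * x ^ 51 + (-52) * x ^ 52 + (44) * x ^ 53 + (64) * x ^ 54 + (36) * x ^ 55 + (8) * x ^ 56) * y ^ 2 + ((4) * x ^ 16 + (16) * x ^ 17 + (44) * x ^ 18 + (68) * x ^ 19 + (92) * x ^ 20 + (108) * x ^ 21 + (108) * x ^ 22 + (140) * x ^ 23 + (188) * x ^ 24 + (316) * x ^ 25 + (464) * x ^ 26 + (468) * x ^ 27 + (272) * x ^ 28 + (-60) * x ^ 29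 + (-156) * x ^ 30 + (212) * x ^ 31 + (880) * x ^ 32 + (1340) * x ^ 33 + (1108) * x ^ 34 + (280) * x ^ 35 + (-572) * x ^ 36 + (-796) * x ^ 37 + (-232) * x ^ 38 + (664) * x ^ 39 + (1292) * x ^ 40 + (1292) * x ^ 41 + (736) * x ^ 42 + (44) * x ^ 43 + (-360) * x ^ 44 + (-352) * x ^ 45 + (-92) * x ^ 46 + (148) * x ^ 47 + (188) * x ^ 48 + (88) * x ^ 49 + (-20) * x ^ 50 + (-52) * x ^ 51 + (-20) * x ^ 52 + (8) * x ^ 53 + (4) * x ^ 54 + (-12) * x ^ 55 + (-8) * x ^ 56) * y ^ 3 + ((-16) * x ^ 23 + (-68) * x ^ 24 + (-136) * x ^ 25 + (-180) * x ^ 26 + (-144) * x ^ 27 + (-40) * x ^ 28 + (-4) * x ^ 29 + (-156) * x ^ 30 + (-496) * x ^ 31 + (-796) * x ^ 32 + (-824) * x ^ 33 + (-528) * x ^ 34 + (-32) * x ^ 35 + (392) * x ^ 36 + (612) * x ^ 37 + (520) * x ^ 38 + (72) * x ^ 39 + (-576) * x ^ 40 + (-1068) * x ^ 41 + (-1032)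 * x ^ 42 + (-536) * x ^ 43 + (16) * x ^ 44 + (188) * x ^ 45 + (-88) * x ^ 46 + (-488) * x ^ 47 + (-660) * x ^ 48 + (-516) * x ^ 49 + (-260) * x ^ 50 + (-80) * x ^ 51 + (-24) * x ^ 52 + (-24) * x ^ 53 + (-44) * x ^ 54 + (-64) * x ^ 55 + (-52) * x ^ 56 + (-28) * x ^ 57 + (-8) * x ^ 58) * y ^ 4 + ((8) * x ^ 23 + (48) * x ^ 24 + (116) * x ^ 25 + (144) * x ^ 26 + (52) * x ^ 27 + (-124) * x ^ 28 + (-140) * x ^ 29 + (200) * x ^ 30 + (732) * x ^ 31 + (952) * x ^ 32 + (444) * x ^ 33 + (-536) * x ^ 34 + (-1224) * x ^ 35 + (-1004) * x ^ 36 + (-20) * x ^ 37 + (968) * x ^ 38 + (1352) * x ^ 39 + (956) * x ^ 40 + (92) * x ^ 41 + (-768) * x ^ 42 + (-1200) * x ^ 43 + (-948) * x ^ 44 + (-180) * x ^ 45 + (600) * x ^ 46 + (816) * x ^ 47 + (380) * x ^ 48 + (-240) * x ^ 49 + (-504) * x ^ 50 + (-300) * x ^ 51 + (32) * x ^ 52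 + (176) * x ^ 53 + (104) * x ^ 54 + (-12) * x ^ 55 + (-52) * x ^ 56 + (-24) * x ^ 57) * y ^ 5 + ((-4) * x ^ 24 + (-12) * x ^ 25 + (-12) * x ^ 26 + (-16) * x ^ 27 + (-40) * x ^ 28 + (-76) * x ^ 29 + (-120) * x ^ 30 + (-96) * x ^ 31 + (40) * x ^ 32 + (220) * x ^ 33 + (340) * x ^ 34 + (288) * x ^ 35 + (124) * x ^ 36 + (-44) * x ^ 37 + (-144) * x ^ 38 + (-208) * x ^ 39 + (-296) * x ^ 40 + (-280) * x ^ 41 + (-116) * x ^ 42 + (132) * x ^ 43 + (260) * x ^ 44 + (148) * x ^ 45 + (-56) * x ^ 46 + (-112) * x ^ 47 + (76) * x ^ 48 + (308) * x ^ 49 + (400) * x ^ 50 + (292) * x ^ 51 + (124) * x ^ 52 + (32) * x ^ 53 + (16) * x ^ 54 + (32) * x ^ 55 + (32) * x ^ 56 + (44) * x ^ 57 + (40) * x ^ 58 + (20) * x ^ 59 + (8) * x ^ 60) * y ^ 6 + ((4) * x ^ 24 + (24) * x ^ 25 + (64) * x ^ 26 + (108) * x ^ 27 + (132) * x ^ 28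 + (124) * x ^ 29 + (128) * x ^ 30 + (136) * x ^ 31 + (124) * x ^ 32 + (108) * x ^ 33 + (112) * x ^ 34 + (268) * x ^ 35 + (516) * x ^ 36 + (624) * x ^ 37 + (384) * x ^ 38 + (-176) * x ^ 39 + (-640) * x ^ 40 + (-640) * x ^ 41 + (-92) * x ^ 42 + (648) * x ^ 43 + (1100) * x ^ 44 + (1088) * x ^ 45 + (688) * x ^ 46 + (168) * x ^ 47 + (-164) * x ^ 48 + (-168) * x ^ 49 + (100) * x ^ 50 + (404) * x ^ 51 + (488) * x ^ 52 + (324) * x ^ 53 + (64) * x ^ 54 + (-80) * x ^ 55 + (-60) * x ^ 56 + (20) * x ^ 57 + (68) * x ^ 58 + (44) * x ^ 59 + (8) * x ^ 60) * y ^ 7 + ((-4) * x ^ 24 + (-28) * x ^ 25 + (-92) * x ^ 26 + (-176) * x ^ 27 + (-200) * x ^ 28 + (-92) * x ^ 29 + (100) * x ^ 30 + (160) * x ^ 31 + (-100) * x ^ 32 + (-572) * x ^ 33 + (-864) * x ^ 34 + (-616) * x ^ 35 + (128) * x ^ 36 + (896) * x ^ 37 + (1096) * x ^ 38 + (576) *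 x ^ 39 + (-256) * x ^ 40 + (-880) * x ^ 41 + (-944) * x ^ 42 + (-560) * x ^ 43 + (-64) * x ^ 44 + (288) * x ^ 45 + (392) * x ^ 46 + (392) * x ^ 47 + (356) * x ^ 48 + (316) * x ^ 49 + (260) * x ^ 50 + (160) * x ^ 51 + (88) * x ^ 52 + (44) * x ^ 53 + (44) * x ^ 54 + (64) * x ^ 55 + (52) * x ^ 56 + (28) * x ^ 57 + (8) * x ^ 58) * y ^ 8 + ((4) * x ^ 24 + (24) * x ^ 25 + (72) * x ^ 26 + (116) * x ^ 27 + (84) * x ^ 28 + (-28) * x ^ 29 + (-128) * x ^ 30 + (-68) * x ^ 31 + (180) * x ^ 32 + (384) * x ^ 33 + (320) * x ^ 34 + (-72) * x ^ 35 + (-616) * x ^ 36 + (-984) * x ^ 37 + (-1016) * x ^ 38 + (-640) * x ^ 39 + (104) * x ^ 40 + (1016) * x ^ 41 + (1672) * x ^ 42 + (1544) * x ^ 43 + (600) * x ^ 44 + (-616) * x ^ 45 + (-1280) * x ^ 46 + (-1000) * x ^ 47 + (-188) * x ^ 48 + (448) * x ^ 49 + (480) * x ^ 50 + (108) * x ^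 51 + (-220) * x ^ 52 + (-268) * x ^ 53 + (-120) * x ^ 54 + (12) * x ^ 55 + (52) * x ^ 56 + (24) * x ^ 57) * y ^ 9 + ((-4) * x ^ 24 + (-20) * x ^ 25 + (-56) * x ^ 26 + (-84) * x ^ 27 + (-60) * x ^ 28 + (8) * x ^ 29 + (60) * x ^ 30 + (-28) * x ^ 31 + (-252) * x ^ 32 + (-384) * x ^ 33 + (-196) * x ^ 34 + (344) * x ^ 35 + (884) * x ^ 36 + (932) * x ^ 37 + (348) * x ^ 38 + (-516) * x ^ 39 + (-1028) * x ^ 40 + (-796) * x ^ 41 + (-36) * x ^ 42 + (716) * x ^ 43 + (972) * x ^ 44 + (636) * x ^ 45 + (76) * x ^ 46 + (-372) * x ^ 47 + (-472) * x ^ 48 + (-304) * x ^ 49 + (-116) * x ^ 50 + (8) * x ^ 51 + (-28) * x ^ 53 + (-40) * x ^ 54 + (-48) * x ^ 55 + (-32) * x ^ 56 + (-44) * x ^ 57 + (-40) * x ^ 58 + (-20) * x ^ 59 + (-8) * x ^ 60) * y ^ 10 + ((4) * x ^ 24 + (16) * x ^ 25 + (44) * x ^ 26 + (68) * x ^ 27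 + (88) * x ^ 28 + (100) * x ^ 29 + (100) * x ^ 30 + (136) * x ^ 31 + (136) * x ^ 32 + (116) * x ^ 33 + (88) * x ^ 34 + (60) * x ^ 35 + (108) * x ^ 36 + (120) * x ^ 37 + (92) * x ^ 38 + (16) * x ^ 39 + (4) * x ^ 40 + (136) * x ^ 41 + (220) * x ^ 42 + (96) * x ^ 43 + (-260) * x ^ 44 + (-544) * x ^ 45 + (-452) * x ^ 46 + (408) * x ^ 48 + (392) * x ^ 49 + (-24) * x ^ 50 + (-468) * x ^ 51 + (-556) * x ^ 52 + (-316) * x ^ 53 + (136) * x ^ 55 + (76) * x ^ 56 + (-20) * x ^ 57 + (-68) * x ^ 58 + (-44) * x ^ 59 + (-8) * x ^ 60) * y ^ 11) * hf + (((4) * x ^ 16 + (16) * x ^ 17 + (48) * x ^ 18 + (92) * x ^ 19 + (168) * x ^ 20 + (248) * x ^ 21 + (264) * x ^ 22 + (224) * x ^ 23 + (156) * x ^ 24 + (228) * x ^ 25 + (436) * x ^ 26 + (596) * x ^ 27 + (584) * x ^ 28 + (400) * x ^ 29 + (184) * x ^ 30 + (-104) * x ^ 31 + (-480) * x ^ 32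 + (-772) * x ^ 33 + (-648) * x ^ 34 + (84) * x ^ 35 + (1152) * x ^ 36 + (1864) * x ^ 37 + (1760) * x ^ 38 + (1040) * x ^ 39 + (300) * x ^ 40 + (52) * x ^ 41 + (176) * x ^ 42 + (360) * x ^ 43 + (368) * x ^ 44 + (208) * x ^ 45 + (72) * x ^ 46 + (8) * x ^ 47 + (28) * x ^ 48 + (40) * x ^ 49 + (20) * x ^ 50 + (8) * x ^ 51) + ((-4) * x ^ 18 + (-20) * x ^ 19 + (-60) * x ^ 20 + (-96) * x ^ 21 + (-80) * x ^ 22 + (16) * x ^ 23 + (108) * x ^ 24 + (36) * x ^ 25 + (-224) * x ^ 26 + (-484) * x ^ 27 + (-356) * x ^ 28 + (272) * x ^ 29 + (1064) * x ^ 30 + (1440) * x ^ 31 + (1044) * x ^ 32 + (196) * x ^ 33 + (-464) * x ^ 34 + (-380) * x ^ 35 + (348) * x ^ 36 + (1096) * x ^ 37 + (1320) * x ^ 38 + (968) * x ^ 39 + (516) * x ^ 40 + (348) * x ^ 41 + (476) * x ^ 42 + (600) * x ^ 43 + (488) * x ^ 44 + (216) * x ^ 45 + (16) * x ^ 46 +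 (16) * x ^ 47 + (104) * x ^ 48 + (128) * x ^ 49 + (72) * x ^ 50 + (16) * x ^ 51) * y + ((4) * x ^ 18 + (20) * x ^ 19 + (60) * x ^ 20 + (112) * x ^ 21 + (160) * x ^ 22 + (208) * x ^ 23 + (260) * x ^ 24 + (348) * x ^ 25 + (432) * x ^ 26 + (460) * x ^ 27 + (464) * x ^ 28 + (496) * x ^ 29 + (600) * x ^ 30 + (688) * x ^ 31 + (676) * x ^ 32 + (604) * x ^ 33 + (620) * x ^ 34 + (828) * x ^ 35 + (1032) * x ^ 36 + (920) * x ^ 37 + (456) * x ^ 38 + (24) * x ^ 39 + (36) * x ^ 40 + (468) * x ^ 41 + (864) * x ^ 42 + (824) * x ^ 43 + (404) * x ^ 44 + (-24) * x ^ 45 + (-160) * x ^ 46 + (-48) * x ^ 47 + (88) * x ^ 48 + (112) * x ^ 49 + (52) * x ^ 50 + (8) * x ^ 51) * y ^ 2) * hq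
  by_contra hne
  have hx1 : x + 1 ≠ 0 := fun h => hne (by linear_combination h)
  have h16 : ((1) + (4) * x ^ 3 + (2) * x ^ 4 + (-4) * x ^ 7 + (-5) * x ^ 8 + (-4) * x ^ 9 + (2) * x ^ 12 + (4) * x ^ 13 + (1) * x ^ 16) = (0 : ℂ) := by
    rcases mul_eq_zero.mp k1 with h1 | h1
    · norm_num at h1
    rcases mul_eq_zero.mp h1 with h1 | h1
    · exact absurd h1 (pow_ne_zero _ hx0)
    rcases mul_eq_zero.mp h1 with h1 | h1
    · exact absurd h1 (pow_ne_zero _ hx1)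
    exact h1
  have h36 : ((2) + (5) * x + (10) * x ^ 2 + (-1) * x ^ 3 + (-6) * x ^ 4 + (-8) * x ^ 5 + (20) * x ^ 6 + (58) * x ^ 7 + (52) * x ^ 8 + (24) * x ^ 9 + (-32) * x ^ 10 + (-18) * x ^ 11 + (36) * x ^ 12 + (110) * x ^ 13 + (136) * x ^ 14 + (82) * x ^ 15 + (14) * x ^ 16 + (-57) * x ^ 17 + (-70) * x ^ 18 + (-57) * x ^ 19 + (14) * x ^ 20 + (82) * x ^ 21 + (136) * x ^ 22 + (110) * x ^ 23 + (36) * x ^ 24 + (-18) * x ^ 25 + (-32) * x ^ 26 + (24) * x ^ 27 + (52) * x ^ 28 + (58) * x ^ 29 + (20) * x ^ 30 + (-8) * x ^ 31 + (-6) * x ^ 32 + (-1) * x ^ 33 + (10) * x ^ 34 + (5) * x ^ 35 + (2) * x ^ 36) = (0 : ℂ) := by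
    rcases mul_eq_zero.mp k2 with h1 | h1
    · norm_num at h1
    rcases mul_eq_zero.mp h1 with h1 | h1
    · exact absurd h1 (pow_ne_zero _ hx0)
    rcases mul_eq_zero.mp h1 with h1 | h1
    · exact absurd h1 (pow_ne_zero _ hx1)
    exact h1
  have hD : ((133779756278576 : ℂ)) = 0 := by
    linear_combination ((72760595186066) + (-67513323369789) * x + (-93891717088869) * x ^ 2 + (-6176566879622) * x ^ 3 + (23548225705698) * x ^ 4 + (120505873054049) * x ^ 5 + (26414288505768) * x ^ 6 + (-545250525257787) * x ^ 7 + (127558204353888) * x ^ 8 + (-263857433230260) * x ^ 9 + (197947176637737) * x ^ 10 + (200193884457963) * x ^ 11 + (-553970560769624) * x ^ 12 + (-14999099798853) * x ^ 13 + (-584184376086683) * x ^ 14 + (193802699032000) * x ^ 15 + (-38282503080630) * x ^ 16 + (181623135132504) * x ^ 17 + (53681336845167) * x ^ 18 + (199484702890087) * x ^ 19 + (-228288123033712) * x ^ 20 + (-288671538432733) * x ^ 21 + (-454210849973055) * x ^ 22 + (-368472293185068) * x ^ 23 + (428140105090316) * x ^ 24 + (-235442399441363) * x ^ 25 + (390991349764276)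 * x ^ 26 + (-373489587658287) * x ^ 27 + (-263741324043610) * x ^ 28 + (91862582004958) * x ^ 29 + (-137973480043907) * x ^ 30 + (207921317640467) * x ^ 31 + (-88429560984602) * x ^ 32 + (-10695398586352) * x ^ 33 + (-28018621415006) * x ^ 34 + (4824942752628) * x ^ 35) * h16 + ((30509580546255) + (-42517289680743) * x + (691180015017) * x ^ 2 + (83680381706979) * x ^ 3 + (-91894818843476) * x ^ 4 + (1211002744597) * x ^ 5 + (118233060664135) * x ^ 6 + (-176157580188769) * x ^ 7 + (60247492444628) * x ^ 8 + (55374674982671) * x ^ 9 + (-112598442882543) * x ^ 10 + (76279979438765) * x ^ 11 + (14884130297383) * x ^ 12 + (-32691166695974) * x ^ 13 + (20040489148288) * x ^ 14 + (-2412471376314) * x ^ 15) * h36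
  norm_num at hD
private lemma sharyginF_symm (x y : ℂ) : sharyginF x y = sharyginF y x := by
  unfold sharyginF; ring

theorem stmt_8 (x y : ℂ) (hf : sharyginF x y = 0)
    (hN : ∃ N : ℕ, 0 < N ∧ x ^ N = 1 ∧ y ^ N = 1) :
    x ^ 210 = 1 ∧ y ^ 210 = 1 := by
  obtain ⟨N, hN0, hxN, hyN⟩ := hN
  have hx0 : x ≠ 0 := by
    intro h; rw [h, zero_pow hN0.ne'] at hxN; exact one_ne_zero hxN.symm
  have hy0 : y ≠ 0 := by
    intro h; rw [h, zero_pow hN0.ne'] at hyN; exact one_ne_zero hyN.symm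
  have hfx : IsOfFinOrder x := isOfFinOrder_iff_pow_eq_one.mpr ⟨N, hN0, hxN⟩
  have hfy : IsOfFinOrder y := isOfFinOrder_iff_pow_eq_one.mpr ⟨N, hN0, hyN⟩
  set n := Nat.lcm (orderOf x) (orderOf y) with hndef
  have hn0 : 0 < n := Nat.lcm_pos hfx.orderOf_pos hfy.orderOf_pos
  have hxn : x ^ n = 1 := orderOf_dvd_iff_pow_eq_one.mp (Nat.dvd_lcm_left _ _)
  have hyn : y ^ n = 1 := orderOf_dvd_iff_pow_eq_one.mp (Nat.dvd_lcm_right _ _)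
  have hf' : sharyginF y x = 0 := by rw [sharyginF_symm]; exact hf
  rcases Nat.even_or_odd n with hev | hodd
  · -- n even
    obtain ⟨m, hm⟩ := hev
    have hm0 : 0 < m := by omega
    have hxm : x ^ m = 1 ∨ x ^ m = -1 := by
      apply mul_self_eq_one_iff.mp
      rw [← pow_add, ← hm]; exact hxn
    have hym : y ^ m = 1 ∨ y ^ m = -1 := by
      apply mul_self_eq_one_iff.mp
      rw [← pow_add, ← hm]; exact hyn
    have hn2m : n = 2 * m := by omega
    rcases Nat.even_or_odd m with hme | hmo
    · -- 4 ∣ n : use c = 1 + m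
      have hmev : m % 2 = 0 := Nat.even_iff.mp hme
      have hc2 : Nat.Coprime (1 + m) 2 :=
        (Nat.prime_two.coprime_iff_not_dvd.mpr (by omega)).symm
      have hcm : Nat.Coprime (1 + m) m := by
        simpa using (Nat.coprime_add_mul_left_left 1 m 1).mpr (Nat.one_coprime m)
      have hc : Nat.Coprime (1 + m) n := by rw [hn2m]; exact Nat.Coprime.mul_right hc2 hcm
      have hgm := master ⟨n, hn0⟩ hxn hyn hf hc
      rw [pow_add, pow_add, pow_one, pow_one] at hgm
      rcases hxm with h1 | h1 <;> rcases hym with h2 | h2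
      · -- both +1 : contradicts minimality
        exfalso
        have hdx : orderOf x ∣ m := orderOf_dvd_of_pow_eq_one h1
        have hdy : orderOf y ∣ m := orderOf_dvd_of_pow_eq_one h2
        have hnd : n ∣ m := Nat.lcm_dvd hdx hdy
        have := Nat.le_of_dvd hm0 hnd
        omega
      · rw [h1, mul_one, h2, mul_neg_one] at hgm
        -- hgm : sharyginF x (-y) = 0
        refine ⟨case_lin1m hx0 hf hgm, case_linm1 hy0 hf' ?_⟩
        rw [sharyginF_symm]; exact hgm
      · rw [h1, mul_neg_one, h2, mul_one] at hgm
        refine ⟨case_linm1 hx0 hf hgm, case_lin1m hy0 hf' ?_⟩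
        rw [sharyginF_symm]; exact hgm
      · rw [h1, mul_neg_one, h2, mul_neg_one] at hgm
        refine ⟨case_linmm hx0 hf hgm, case_linmm hy0 hf' ?_⟩
        rw [sharyginF_symm]; exact hgm
    · -- n ≡ 2 mod 4 : use c = 2 + m
      have hmodd : m % 2 = 1 := Nat.odd_iff.mp hmo
      have hc2m : Nat.Coprime 2 m := Nat.prime_two.coprime_iff_not_dvd.mpr (by omega)
      have hc2 : Nat.Coprime (2 + m) 2 :=
        (Nat.prime_two.coprime_iff_not_dvd.mpr (by omega)).symm
      have hcm : Nat.Coprime (2 + m) m := by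
        simpa using (Nat.coprime_add_mul_left_left 2 m 1).mpr hc2m
      have hc : Nat.Coprime (2 + m) n := by rw [hn2m]; exact Nat.Coprime.mul_right hc2 hcm
      have hgm := master ⟨n, hn0⟩ hxn hyn hf hc
      rw [pow_add, pow_add] at hgm
      rcases hxm with h1 | h1 <;> rcases hym with h2 | h2
      · rw [h1, mul_one, h2, mul_one] at hgm
        refine ⟨case_sq11 hx0 hf hgm, case_sq11 hy0 hf' ?_⟩
        rw [sharyginF_symm]; exact hgm
      · rw [h1, mul_one, h2, mul_neg_one] at hgm
        refine ⟨case_sq1m hx0 hf hgm, case_sqm1 hy0 hf' ?_⟩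
        rw [sharyginF_symm]; exact hgm
      · rw [h1, mul_neg_one, h2, mul_one] at hgm
        refine ⟨case_sqm1 hx0 hf hgm, case_sq1m hy0 hf' ?_⟩
        rw [sharyginF_symm]; exact hgm
      · -- the hard case : also use c = 4 + m
        rw [h1, mul_neg_one, h2, mul_neg_one] at hgm
        have hc2' : Nat.Coprime (4 + m) 2 :=
          (Nat.prime_two.coprime_iff_not_dvd.mpr (by omega)).symm
        have hc4m : Nat.Coprime 4 m := by
          have := Nat.Coprime.pow_left 2 hc2m
          norm_num at this; exact this
        have hcm' : Nat.Coprime (4 + m) m := by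
          simpa using (Nat.coprime_add_mul_left_left 4 m 1).mpr hc4m
        have hc' : Nat.Coprime (4 + m) n := by
          rw [hn2m]; exact Nat.Coprime.mul_right hc2' hcm'
        have hqm := master ⟨n, hn0⟩ hxn hyn hf hc'
        rw [pow_add, pow_add, h1, mul_neg_one, h2, mul_neg_one] at hqm
        have hx1 : x = -1 := case_sqmm hx0 hf hgm hqm
        have hy1 : y = -1 := by
          apply case_sqmm hy0 hf'
          · rw [sharyginF_symm]; exact hgm
          · rw [sharyginF_symm]; exact hqm
        exfalso
        rw [hx1, hy1] at hf
        norm_num [sharyginF] at hf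
  · -- n odd : c = 2
    have hnodd : n % 2 = 1 := Nat.odd_iff.mp hodd
    have hc : Nat.Coprime 2 n := Nat.prime_two.coprime_iff_not_dvd.mpr (by omega)
    have hgm := master ⟨n, hn0⟩ hxn hyn hf hc
    refine ⟨case_sq11 hx0 hf hgm, case_sq11 hy0 hf' ?_⟩
    rw [sharyginF_symm]; exact hgm
end

section
/- Let f(x,y) = 1 + x + y + x²y³ + x³y² + x³y³ and α = exp(2πi/3). For x ∈ ℂ such that x^N = 1 for some positive integer N, one has f(x,x) = 0 if and only if x = α or x = α². -/
private lemma totient_le_four_dvd {n : ℕ} (hn : 0 < n) (h : n.totient ≤ 4) : n ∣ 120 := by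
  have key : ∀ m : ℕ, m ∣ n → m.totient ≤ 4 := fun m hm =>
    le_trans (Nat.le_of_dvd (Nat.totient_pos.2 hn) (Nat.totient_dvd_of_dvd hm)) h
  rw [← Nat.factorization_le_iff_dvd hn.ne' (by norm_num)]
  intro p
  by_cases hp : p.Prime
  · set k := n.factorization p with hk
    have hdvd : p ^ k ∣ n := Nat.ordProj_dvd n p
    rw [← Nat.Prime.pow_dvd_iff_le_factorization hp (by norm_num)]
    rcases Nat.eq_zero_or_pos k with h0 | hkpos
    · simp [h0]
    · have hpn : p ∣ n := dvd_trans (dvd_pow_self p hkpos.ne') hdvd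
      have hp5 : p ≤ 5 := by
        have := key p hpn
        rw [Nat.totient_prime hp] at this
        omega
      have hnot : ∀ m : ℕ, 4 < m.totient → ¬ (m ∣ n) := fun m hm hmn => by
        have := key m hmn; omega
      have hp2 : 2 ≤ p := hp.two_le
      interval_cases p
      · have hk3 : k ≤ 3 := by
          by_contra hc
          have h16 : (2:ℕ)^4 ∣ n := (pow_dvd_pow 2 (by omega : 4 ≤ k)).trans hdvd
          exact hnot 16 (by decide) (by norm_num at h16; exact h16)
        exact dvd_trans (pow_dvd_pow 2 hk3) (by norm_num)
      · have hk1 : k ≤ 1 := by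
          by_contra hc
          have h9 : (3:ℕ)^2 ∣ n := (pow_dvd_pow 3 (by omega : 2 ≤ k)).trans hdvd
          exact hnot 9 (by decide) (by norm_num at h9; exact h9)
        exact dvd_trans (pow_dvd_pow 3 hk1) (by norm_num)
      · exact absurd hp (by norm_num)
      · have hk1 : k ≤ 1 := by
          by_contra hc
          have h25 : (5:ℕ)^2 ∣ n := (pow_dvd_pow 5 (by omega : 2 ≤ k)).trans hdvd
          exact hnot 25 (by decide) (by norm_num at h25; exact h25)
        exact dvd_trans (pow_dvd_pow 5 hk1) (by norm_num)
  · simp [Nat.factorization_eq_zero_of_not_prime n hp]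

open Polynomial in
private lemma quartic_no_root_of_unity (x : ℂ) (N : ℕ) (hN : 0 < N) (hxN : x ^ N = 1)
    (hq : x^4 + x^3 - 2*x^2 + x + 1 = 0) : False := by
  have hfin : IsOfFinOrder x := isOfFinOrder_iff_pow_eq_one.2 ⟨N, hN, hxN⟩
  set n := orderOf x with hn
  have hnpos : 0 < n := hfin.orderOf_pos
  have hprim : IsPrimitiveRoot x n := IsPrimitiveRoot.orderOf x
  have hdeg : (X^4 + X^3 - 2*X^2 + X + 1 : ℚ[X]).natDegree = 4 := by compute_degree!
  have hQ : (Polynomial.aeval x) (X^4 + X^3 - 2*X^2 + X + 1 : ℚ[X]) = 0 := by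
    simp only [map_add, map_sub, map_mul, map_pow, map_ofNat, map_one, aeval_X]
    linear_combination hq
  have hdvd : minpoly ℚ x ∣ (X^4 + X^3 - 2*X^2 + X + 1 : ℚ[X]) := minpoly.dvd ℚ x hQ
  rw [← Polynomial.cyclotomic_eq_minpoly_rat hprim hnpos] at hdvd
  have hne : (X^4 + X^3 - 2*X^2 + X + 1 : ℚ[X]) ≠ 0 := by
    intro h; rw [h] at hdeg; simp at hdeg
  have htot : n.totient ≤ 4 := by
    have := Polynomial.natDegree_le_of_dvd hdvd hne
    rwa [Polynomial.natDegree_cyclotomic, hdeg] at this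
  obtain ⟨m, hm⟩ := totient_le_four_dvd hnpos htot
  have h120 : x ^ 120 = 1 := by
    rw [hm, pow_mul, pow_orderOf_eq_one, one_pow]
  have : (1:ℂ) = 0 := by
    linear_combination ((87057634136927/2362204569031200) + (503493508120873/1181102284515600)*x^1 + (1321634504647931/2362204569031200)*x^2 + (59763826043011/124326556264800)*x^3 + (20685583204999/118110228451560)*x^4 + (-471307795355239/2362204569031200)*x^5 + (-1158416075909941/2362204569031200)*x^6 + (-666711936858863/1181102284515600)*x^7 + (-680244046177/1735638919200)*x^8 + (-4452469172935/94488182761248)*x^9 + (23485230789289/73818892782225)*x^10 + (51403407066425/94488182761248)*x^11 + (1255093470024143/2362204569031200)*x^12 + (29648590957/103778427600)*x^13 + (-201286849232821/2362204569031200)*x^14 + (-989169342725479/2362204569031200)*x^15 + (-67167952656377/118110228451560)*x^16 + (-1108554010453831/2362204569031200)*x^17 + (-387707903842949/2362204569031200)*x^18 + (251564139394153/1181102284515600)*x^19 + (1173368977107167/2362204569031200)*x^20 + (53165979790649/94488182761248)*x^21 + (28192752640711/73818892782225)*x^22 + (167649787651/4973062250592)*x^23 + (-777815952002113/2362204569031200)*x^24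 + (-647117164499207/1181102284515600)*x^25 + (-1243199308642789/2362204569031200)*x^26 + (-647087046486151/2362204569031200)*x^27 + (4763389/48346488)*x^28 + (1010520834467801/2362204569031200)*x^29 + (1345242941063339/2362204569031200)*x^30 + (545073532078657/1181102284515600)*x^31 + (357079273300463/2362204569031200)*x^32 + (-1121155622141/4973062250592)*x^33 + (-37146329315711/73818892782225)*x^34 + (-52945665615559/94488182761248)*x^35 + (-878253788600017/2362204569031200)*x^36 + (-23899016779103/1181102284515600)*x^37 + (803614634849899/2362204569031200)*x^38 + (1302684727022681/2362204569031200)*x^39 + (61529818241767/118110228451560)*x^40 + (618956487918329/2362204569031200)*x^41 + (-264063120120229/2362204569031200)*x^42 + (-45308188907/103778427600)*x^43 + (-1346374097092993/2362204569031200)*x^44 + (-42845170500295/94488182761248)*x^45 + (-10195337989289/73818892782225)*x^46 + (22466855345465/94488182761248)*x^47 + (884151612527/1735638919200)*x^48 + (658696250394313/1181102284515600)*x^49 + (853847620530491/2362204569031200)*x^50 + (15935652760889/2362204569031200)*x^51 + (-41448162856889/118110228451560)*x^52 + (-68968713613661/124326556264800)*x^53 + (-1217304228907381/2362204569031200)*x^54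 + (-295239642017423/1181102284515600)*x^55 + (295239642017423/2362204569031200)*x^56 + (42060463099193/94488182761248)*x^57 + (42085975609289/73818892782225)*x^58 + (42060463099193/94488182761248)*x^59 + (295239642017423/2362204569031200)*x^60 + (-295239642017423/1181102284515600)*x^61 + (-1217304228907381/2362204569031200)*x^62 + (-68968713613661/124326556264800)*x^63 + (-41448162856889/118110228451560)*x^64 + (15935652760889/2362204569031200)*x^65 + (853847620530491/2362204569031200)*x^66 + (658696250394313/1181102284515600)*x^67 + (884151612527/1735638919200)*x^68 + (22466855345465/94488182761248)*x^69 + (-10195337989289/73818892782225)*x^70 + (-42845170500295/94488182761248)*x^71 + (-1346374097092993/2362204569031200)*x^72 + (-45308188907/103778427600)*x^73 + (-264063120120229/2362204569031200)*x^74 + (618956487918329/2362204569031200)*x^75 + (61529818241767/118110228451560)*x^76 + (1302684727022681/2362204569031200)*x^77 + (803614634849899/2362204569031200)*x^78 + (-23899016779103/1181102284515600)*x^79 + (-878253788600017/2362204569031200)*x^80 + (-52945665615559/94488182761248)*x^81 + (-37146329315711/73818892782225)*x^82 + (-1121155622141/4973062250592)*x^83 + (357079273300463/2362204569031200)*x^84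 + (545073532078657/1181102284515600)*x^85 + (1345242941063339/2362204569031200)*x^86 + (1010520834467801/2362204569031200)*x^87 + (4763389/48346488)*x^88 + (-647087046486151/2362204569031200)*x^89 + (-1243199308642789/2362204569031200)*x^90 + (-647117164499207/1181102284515600)*x^91 + (-777815952002113/2362204569031200)*x^92 + (167649787651/4973062250592)*x^93 + (28192752640711/73818892782225)*x^94 + (53165979790649/94488182761248)*x^95 + (1173368977107167/2362204569031200)*x^96 + (251564139394153/1181102284515600)*x^97 + (-387707903842949/2362204569031200)*x^98 + (-1108554010453831/2362204569031200)*x^99 + (-67167952656377/118110228451560)*x^100 + (-989169342725479/2362204569031200)*x^101 + (-201286849232821/2362204569031200)*x^102 + (29648590957/103778427600)*x^103 + (1255093470024143/2362204569031200)*x^104 + (51403407066425/94488182761248)*x^105 + (23485230789289/73818892782225)*x^106 + (-4452469172935/94488182761248)*x^107 + (-680244046177/1735638919200)*x^108 + (-666711936858863/1181102284515600)*x^109 + (-1158416075909941/2362204569031200)*x^110 + (-471307795355239/2362204569031200)*x^111 + (20685583204999/118110228451560)*x^112 + (59763826043011/124326556264800)*x^113 + (1321634504647931/2362204569031200)*x^114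 + (503493508120873/1181102284515600)*x^115 + (87057634136927/2362204569031200)*x^116 + (-21209232044743/94488182761248)*x^117 + (-50758607859289/73818892782225)*x^118 + (-21209232044743/94488182761248)*x^119) * hq + ((-2275146934894273/2362204569031200) + (1094044650378673/2362204569031200)*x^1 + (718168750871941/787401523010400)*x^2 + (21209232044743/94488182761248)*x^3) * h120
  norm_num at this

theorem stmt_11 (α : ℂ) (hα : α = Complex.exp (2 * Real.pi * Complex.I / 3))
    (x : ℂ) (hx : ∃ N : ℕ, 0 < N ∧ x ^ N = 1) :
    sharyginF x x = 0 ↔ x = α ∨ x = α ^ 2 := by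
  have h3 : α ^ 3 = 1 := by
    rw [hα, ← Complex.exp_nat_mul]
    rw [show (3:ℕ) * (2 * (Real.pi:ℂ) * Complex.I / 3) = 2 * Real.pi * Complex.I by
      push_cast; ring]
    exact Complex.exp_two_pi_mul_I
  have hne : α ≠ 1 := by
    rw [hα, Ne, Complex.exp_eq_one_iff]
    rintro ⟨k, hk⟩
    have hpi : (Real.pi : ℂ) ≠ 0 := by exact_mod_cast Real.pi_ne_zero
    have hk3 : (k : ℂ) * 3 = 1 := by
      have h2pi : (2*(Real.pi:ℂ)*Complex.I) ≠ 0 := by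
        simp [hpi, Complex.I_ne_zero]
      field_simp at hk
      apply mul_right_cancel₀ h2pi
      linear_combination (-(2*(Real.pi:ℂ)*Complex.I)) * hk
    have hre : ((k : ℝ) * 3 = 1) := by exact_mod_cast congrArg Complex.re hk3
    have : (3:ℝ) ≤ |(k:ℝ) * 3| ∨ (k:ℝ) = 0 := by
      rcases eq_or_ne k 0 with h | h
      · right; simp [h]
      · left
        rw [abs_mul, show |(3:ℝ)| = 3 by norm_num]
        have : (1:ℝ) ≤ |(k:ℝ)| := by exact_mod_cast Int.one_le_abs (by exact_mod_cast h)
        nlinarith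
    rcases this with h | h
    · rw [hre] at h; norm_num at h
    · rw [h] at hre; norm_num at hre
  have h2 : α ^ 2 + α + 1 = 0 := by
    have hfac : (α - 1) * (α ^ 2 + α + 1) = 0 := by linear_combination h3
    rcases mul_eq_zero.1 hfac with h | h
    · exact absurd (sub_eq_zero.1 h) hne
    · exact h
  constructor
  · intro hf
    have hfac : (x^2 + x + 1) * (x^4 + x^3 - 2*x^2 + x + 1) = 0 := by
      unfold sharyginF at hf
      linear_combination hf
    rcases mul_eq_zero.1 hfac with hq1 | hq2
    · have key : (x - α) * (x - α^2) = 0 := by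
        linear_combination hq1 - x * h2 + h3
      rcases mul_eq_zero.1 key with h | h
      · exact Or.inl (sub_eq_zero.1 h)
      · exact Or.inr (sub_eq_zero.1 h)
    · exfalso
      obtain ⟨N, hN, hxN⟩ := hx
      exact quartic_no_root_of_unity x N hN hxN hq2
  · rintro (rfl | rfl) <;> unfold sharyginF
    · linear_combination 2*h2 + (x^3 + 1 + 2*x^2) * h3
    · linear_combination 2*h2 + (2*α*(α^6 + α^3 + 1) + α^9 + α^6 + α^3 + 1) * h3
end

section
/- Let f(x,y) = 1 + x + y + x²y³ + x³y² + x³y³. There are no x, y ∈ ℂ with x^35 = 1, y^35 = 1, and f(x,y) = 0. -/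
/-- Ramanujan-type value of `∑_{k < 35, gcd(k,35)=1} ζ^{mk}`. -/
def gval (m : ℕ) : ℤ :=
  (if 35 ∣ m then 35 else 0) - (if 35 ∣ 5 * m then 7 else 0)
    - (if 35 ∣ 7 * m then 5 else 0) + 1

lemma gval_cases (m : ℕ) :
    (35 ∣ m ∧ gval m = 24) ∨ (7 ∣ m ∧ ¬ 5 ∣ m ∧ gval m = -6)
      ∨ (5 ∣ m ∧ ¬ 7 ∣ m ∧ gval m = -4)
      ∨ (¬ 7 ∣ m ∧ ¬ 5 ∣ m ∧ gval m = 1) := by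
  unfold gval
  by_cases h2 : 35 ∣ 5 * m <;> by_cases h3 : 35 ∣ 7 * m
  · have h1 : 35 ∣ m := by omega
    simp only [if_pos h1, if_pos h2, if_pos h3]
    exact Or.inl ⟨h1, by norm_num⟩
  · have h1 : ¬ 35 ∣ m := by omega
    have h7 : 7 ∣ m := by omega
    have h5 : ¬ 5 ∣ m := by omega
    simp only [if_neg h1, if_pos h2, if_neg h3]
    exact Or.inr (Or.inl ⟨h7, h5, by norm_num⟩)
  · have h1 : ¬ 35 ∣ m := by omega
    have h5 : 5 ∣ m := by omega
    have h7 : ¬ 7 ∣ m := by omega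
    simp only [if_neg h1, if_neg h2, if_pos h3]
    exact Or.inr (Or.inr (Or.inl ⟨h5, h7, by norm_num⟩))
  · have h1 : ¬ 35 ∣ m := by omega
    have h7 : ¬ 7 ∣ m := by omega
    have h5 : ¬ 5 ∣ m := by omega
    simp only [if_neg h1, if_neg h2, if_neg h3]
    exact Or.inr (Or.inr (Or.inr ⟨h7, h5, by norm_num⟩))

lemma geom_aux {ω : ℂ} {n : ℕ} (h : ω ^ n = 1) :
    ∑ k ∈ Finset.range n, ω ^ k = if ω = 1 then (n : ℂ) else 0 := by
  split_ifs with h1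
  · simp [h1]
  · rw [geom_sum_eq h1, h]
    simp

lemma sum_pow {ζ : ℂ} (hζ : IsPrimitiveRoot ζ 35) (m : ℕ) :
    ∑ k ∈ (Finset.range 35).filter (fun k => Nat.Coprime k 35), (ζ ^ m) ^ k
      = (gval m : ℂ) := by
  set ω := ζ ^ m with hω
  have h35 : ω ^ 35 = 1 := by
    rw [hω, ← pow_mul, mul_comm, pow_mul, hζ.pow_eq_one, one_pow]
  have h5 : (ω ^ 5) ^ 7 = 1 := by rw [← pow_mul]; exact h35
  have h7 : (ω ^ 7) ^ 5 = 1 := by rw [← pow_mul]; exact h35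
  have key : (∑ k ∈ (Finset.range 35).filter (fun k => Nat.Coprime k 35), ω ^ k)
      = (∑ k ∈ Finset.range 35, ω ^ k) - (∑ k ∈ Finset.range 7, (ω ^ 5) ^ k)
        - (∑ k ∈ Finset.range 5, (ω ^ 7) ^ k) + 1 := by
    simp only [Finset.sum_filter, Finset.sum_range_succ, Finset.sum_range_zero, ← pow_mul]
    norm_num [Nat.Coprime]
    ring
  rw [key, geom_aux h35, geom_aux h5, geom_aux h7]
  have c1 : ω = 1 ↔ 35 ∣ m := hζ.pow_eq_one_iff_dvd m
  have c2 : ω ^ 5 = 1 ↔ 35 ∣ 5 * m := by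
    rw [hω, ← pow_mul, mul_comm, hζ.pow_eq_one_iff_dvd]
  have c3 : ω ^ 7 = 1 ↔ 35 ∣ 7 * m := by
    rw [hω, ← pow_mul, mul_comm, hζ.pow_eq_one_iff_dvd]
  by_cases d2 : 35 ∣ 5 * m <;> by_cases d3 : 35 ∣ 7 * m
  · have d1 : 35 ∣ m := by omega
    norm_num [gval, c1, c2, c3, d1, d2, d3]
  · have d1 : ¬ 35 ∣ m := by omega
    norm_num [gval, c1, c2, c3, d1, d2, d3]
  · have d1 : ¬ 35 ∣ m := by omega
    norm_num [gval, c1, c2, c3, d1, d2, d3]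
  · have d1 : ¬ 35 ∣ m := by omega
    norm_num [gval, c1, c2, c3, d1, d2, d3]

set_option maxHeartbeats 2000000 in
theorem stmt_12 : ¬ ∃ x y : ℂ, x ^ 35 = 1 ∧ y ^ 35 = 1 ∧ sharyginF x y = 0 := by
  rintro ⟨x, y, hx, hy, hf⟩
  have hζ : IsPrimitiveRoot (Complex.exp (2 * Real.pi * Complex.I / 35)) 35 :=
    Complex.isPrimitiveRoot_exp 35 (by norm_num)
  set ζ := Complex.exp (2 * Real.pi * Complex.I / 35) with hζdef
  obtain ⟨i, hi, hxi⟩ := hζ.eq_pow_of_pow_eq_one hx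
  obtain ⟨j, hj, hyj⟩ := hζ.eq_pow_of_pow_eq_one hy
  set P : Polynomial ℚ := 1 + Polynomial.X ^ i + Polynomial.X ^ j
    + Polynomial.X ^ (2 * i + 3 * j) + Polynomial.X ^ (3 * i + 2 * j)
    + Polynomial.X ^ (3 * i + 3 * j) with hPdef
  have hP : ∀ k : ℕ, Polynomial.aeval (ζ ^ k) P
      = (ζ ^ 0) ^ k + (ζ ^ i) ^ k + (ζ ^ j) ^ k + (ζ ^ (2 * i + 3 * j)) ^ k
        + (ζ ^ (3 * i + 2 * j)) ^ k + (ζ ^ (3 * i + 3 * j)) ^ k := by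
    intro k
    simp only [hPdef, map_add, map_one, map_pow, Polynomial.aeval_X, ← pow_mul, pow_zero,
      one_pow]
    ring
  have h0 : Polynomial.aeval ζ P = 0 := by
    have h1 := hP 1
    simp only [pow_one] at h1
    rw [h1, hxi, hyj]
    rw [pow_add, pow_add, pow_add]
    simp only [pow_mul']
    rw [hxi, hyj]
    rw [← hf]
    unfold sharyginF
    ring
  set S := (Finset.range 35).filter (fun k => Nat.Coprime k 35) with hS
  have key : ∀ k ∈ S, Polynomial.aeval (ζ ^ k) P = 0 := by
    intro k hk
    have hkcop : Nat.Coprime k 35 := (Finset.mem_filter.mp hk).2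
    have hprim := hζ.pow_of_coprime k hkcop
    have h1 : minpoly ℚ ζ ∣ P := minpoly.dvd ℚ ζ h0
    have h2 : minpoly ℚ (ζ ^ k) = minpoly ℚ ζ := by
      rw [← Polynomial.cyclotomic_eq_minpoly_rat hprim (by norm_num),
        ← Polynomial.cyclotomic_eq_minpoly_rat hζ (by norm_num)]
    obtain ⟨q, hq⟩ := h1
    rw [hq, map_mul, ← h2, minpoly.aeval, zero_mul]
  have hsum : ∑ k ∈ S, Polynomial.aeval (ζ ^ k) P = 0 := Finset.sum_eq_zero key
  rw [Finset.sum_congr rfl (fun k _ => hP k)] at hsum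
  simp only [Finset.sum_add_distrib] at hsum
  rw [hS] at hsum
  rw [sum_pow hζ 0, sum_pow hζ i, sum_pow hζ j, sum_pow hζ (2 * i + 3 * j),
    sum_pow hζ (3 * i + 2 * j), sum_pow hζ (3 * i + 3 * j)] at hsum
  have hint : gval 0 + gval i + gval j + gval (2 * i + 3 * j) + gval (3 * i + 2 * j)
      + gval (3 * i + 3 * j) = 0 := by exact_mod_cast hsum
  have g0 : gval 0 = 24 := by norm_num [gval]
  have c1 := gval_cases i
  have c2 := gval_cases j
  have c3 := gval_cases (2 * i + 3 * j)
  have c4 := gval_cases (3 * i + 2 * j)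
  have c5 := gval_cases (3 * i + 3 * j)
  rcases c1 with ⟨h1, e1⟩ | ⟨h1, h1', e1⟩ | ⟨h1, h1', e1⟩ | ⟨h1, h1', e1⟩ <;>
    rcases c2 with ⟨h2, e2⟩ | ⟨h2, h2', e2⟩ | ⟨h2, h2', e2⟩ | ⟨h2, h2', e2⟩ <;>
    omega
end

section
/- Let ζ = exp(2πi/7) and consider the heptagonal triangle with vertices A = ζ³, B = 1, C = ζ in ℂ (its angles are ∠A = π/7, ∠B = 2π/7, ∠C = 4π/7). With side lengths a = dist(B,C), b = dist(C,A), c = dist(A,B), define the feet of the internal bisectors A₁ = (b·B + c·C)/(b+c), B₁ = (a·A + c·C)/(a+c), C₁ = (a·A + b·B)/(a+b). Then dist(C₁, A₁) = dist(C₁, B₁); that is, the bisectral triangle A₁B₁C₁ of the heptagonal triangle is isosceles. -/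
set_option maxHeartbeats 2000000 in
open Complex in
theorem stmt_13 (ζ A B C : ℂ) (hζ : ζ = Complex.exp (2 * Real.pi * Complex.I / 7))
    (hA : A = ζ ^ 3) (hB : B = 1) (hC : C = ζ)
    (a b c : ℝ) (ha : a = dist B C) (hb : b = dist C A) (hc : c = dist A B)
    (A₁ B₁ C₁ : ℂ)
    (hA₁ : A₁ = ((b : ℂ) * B + (c : ℂ) * C) / ((b : ℂ) + (c : ℂ)))
    (hB₁ : B₁ = ((a : ℂ) * A + (c : ℂ) * C) / ((a : ℂ) + (c : ℂ)))
    (hC₁ : C₁ = ((a : ℂ) * A + (b : ℂ) * B) / ((a : ℂ) + (b : ℂ))) :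
    dist C₁ A₁ = dist C₁ B₁ := by
  have pi_pos := Real.pi_pos
  have h7 : ζ ^ 7 = 1 := by
    rw [hζ, ← Complex.exp_nat_mul]
    rw [show ((7:ℕ):ℂ) * (2 * Real.pi * Complex.I / 7) = 2 * Real.pi * Complex.I by push_cast; ring]
    exact Complex.exp_two_pi_mul_I
  have hζ0 : ζ ≠ 0 := by rw [hζ]; exact Complex.exp_ne_zero _
  have hζ1 : ζ ≠ 1 := by
    rw [hζ]
    intro h
    rw [Complex.exp_eq_one_iff] at h
    obtain ⟨n, hn⟩ := h
    have hπ : (Real.pi:ℂ) ≠ 0 := by exact_mod_cast Real.pi_ne_zero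
    have h2 : (n:ℂ) * 7 = 1 := by
      have hne : (2 * (Real.pi:ℂ) * Complex.I) ≠ 0 := by
        simp [hπ, Complex.I_ne_zero]
      exact mul_left_cancel₀ hne (by linear_combination (-7 : ℂ) * hn)
    have h3 : (n:ℤ) * 7 = 1 := by exact_mod_cast h2
    omega
  have habs : ‖ζ‖ = 1 := by
    rw [hζ, show 2 * (Real.pi:ℂ) * Complex.I / 7 = ((2*Real.pi/7 : ℝ):ℂ) * Complex.I by push_cast; ring]
    exact Complex.norm_exp_ofReal_mul_I _
  have hconj : (starRingEnd ℂ) ζ = ζ ^ 6 := by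
    apply mul_left_cancel₀ hζ0
    rw [Complex.mul_conj]
    rw [show Complex.normSq ζ = ‖ζ‖^2 from (Complex.sq_norm ζ).symm, habs]
    push_cast
    linear_combination -h7
  -- real part facts
  have hre1 : ζ.re = Real.cos (2*Real.pi/7) := by
    rw [hζ, show 2 * (Real.pi:ℂ) * Complex.I / 7 = ((2*Real.pi/7 : ℝ):ℂ) * Complex.I by push_cast; ring]
    exact Complex.exp_ofReal_mul_I_re _
  have hre3 : (ζ^3).re = Real.cos (6*Real.pi/7) := by
    rw [hζ, ← Complex.exp_nat_mul,
      show ((3:ℕ):ℂ) * (2 * Real.pi * Complex.I / 7) = ((6*Real.pi/7 : ℝ):ℂ) * Complex.I by push_cast; ring]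
    exact Complex.exp_ofReal_mul_I_re _
  have hc3 : (starRingEnd ℂ) (ζ^3) = ζ^4 := by
    rw [map_pow, hconj]; linear_combination (ζ^11 + ζ^4) * h7
  have hc2 : (starRingEnd ℂ) (ζ^2) = ζ^5 := by
    rw [map_pow, hconj]; linear_combination ζ^5 * h7
  have hadd3 : ζ^3 + ζ^4 = ((2*(ζ^3).re : ℝ):ℂ) := by
    have h := Complex.add_conj (ζ^3)
    rw [hc3] at h
    exact h
  have hadd1 : ζ + ζ^6 = ((2*ζ.re : ℝ):ℂ) := by
    have h := Complex.add_conj ζ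
    rw [hconj] at h
    exact h
  have hadd1' : ζ + ζ^6 = 2*((ζ.re:ℝ):ℂ) := by rw [hadd1]; push_cast; ring
  -- p and q
  set p : ℝ := ‖1+ζ‖ with hp_def
  set q : ℝ := ‖1+ζ+ζ^2‖ with hq_def
  set t : ℝ := ‖1-ζ‖ with ht_def
  have hp : ((p : ℝ) : ℂ) = -(ζ^3+ζ^4) := by
    have h1 : ((p^2 : ℝ) : ℂ) = (1+ζ) * (1+ζ^6) := by
      rw [hp_def, Complex.sq_norm, ← Complex.mul_conj, map_add, map_one, hconj]
    have h2 : p^2 = (2*Real.cos (6*Real.pi/7))^2 := by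
      have h3 : (((2*Real.cos (6*Real.pi/7))^2 : ℝ):ℂ) = (1+ζ) * (1+ζ^6) := by
        rw [← hre3, Complex.ofReal_pow, ← hadd3]
        linear_combination (1+ζ) * h7
      exact_mod_cast h1.trans h3.symm
    have hc0 : Real.cos (6*Real.pi/7) ≤ 0 :=
      Real.cos_nonpos_of_pi_div_two_le_of_le (by nlinarith) (by nlinarith)
    have hp0 : (0:ℝ) ≤ p := norm_nonneg _
    have hpv : p = -(2*Real.cos (6*Real.pi/7)) := by
      rw [← Real.sqrt_sq hp0, h2, Real.sqrt_sq_eq_abs, abs_of_nonpos (by linarith)]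
    rw [hpv, ← hre3, Complex.ofReal_neg, ← hadd3]
  have hq : ((q : ℝ) : ℂ) = 1+ζ+ζ^6 := by
    have h1 : ((q^2 : ℝ) : ℂ) = (1+ζ+ζ^2) * (1+ζ^6+ζ^5) := by
      rw [hq_def, Complex.sq_norm, ← Complex.mul_conj, map_add, map_add, map_one, hconj, hc2]
    have h2 : q^2 = (1+2*Real.cos (2*Real.pi/7))^2 := by
      have h3 : (((1+2*Real.cos (2*Real.pi/7))^2 : ℝ):ℂ) = (1+ζ+ζ^2) * (1+ζ^6+ζ^5) := by
        rw [← hre1]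
        push_cast
        linear_combination (-(2 + ζ + ζ^6 + 2*((ζ.re:ℝ):ℂ))) * hadd1' + (ζ^5 - ζ) * h7
      exact_mod_cast h1.trans h3.symm
    have hc0 : 0 ≤ Real.cos (2*Real.pi/7) := by
      apply Real.cos_nonneg_of_mem_Icc
      constructor <;> nlinarith
    have hq0 : (0:ℝ) ≤ q := norm_nonneg _
    have hqv : q = 1+2*Real.cos (2*Real.pi/7) := by
      rw [← Real.sqrt_sq hq0, h2, Real.sqrt_sq_eq_abs, _root_.abs_of_nonneg (by linarith)]
    rw [hqv, ← hre1]
    push_cast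
    linear_combination -hadd1'
  -- positivity
  have ht0 : (0:ℝ) < t := by
    rw [ht_def]
    exact norm_pos_iff.mpr (sub_ne_zero.mpr (Ne.symm hζ1))
  have hq0' : (0:ℝ) < q := by
    rw [hq_def]
    apply norm_pos_iff.mpr
    intro h
    have h3 : ζ^3 = 1 := by linear_combination (ζ-1)*h
    exact hζ1 (by linear_combination h7 + (-ζ*(ζ^3+1))*h3)
  have hp0 : (0:ℝ) ≤ p := norm_nonneg _
  have hq0 : (0:ℝ) ≤ q := norm_nonneg _
  have hpq : (0:ℝ) < p + q := by linarith
  have h1p : (0:ℝ) < 1 + p := by linarith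
  have h1q : (0:ℝ) < 1 + q := by linarith
  -- side lengths
  have ha' : a = t := by rw [ha, hB, hC, Complex.dist_eq, ht_def]
  have hb' : b = t * p := by
    rw [hb, hC, hA, Complex.dist_eq, show ζ - ζ^3 = ζ * ((1-ζ)*(1+ζ)) by ring,
      norm_mul, norm_mul, habs, one_mul, ht_def, hp_def]
  have hc' : c = t * q := by
    rw [hc, hA, hB, Complex.dist_eq, show ζ^3 - 1 = -((1-ζ)*(1+ζ+ζ^2)) by ring,
      norm_neg, norm_mul, ht_def, hq_def]
  -- feet simplified
  have htC : (t:ℂ) ≠ 0 := Complex.ofReal_ne_zero.mpr ht0.ne'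
  clear_value p q t
  have hne1 : ((t*p:ℝ):ℂ) + ((t*q:ℝ):ℂ) ≠ 0 := by
    rw [← Complex.ofReal_add]; exact Complex.ofReal_ne_zero.mpr (by nlinarith)
  have hne2 : ((p:ℝ):ℂ) + ((q:ℝ):ℂ) ≠ 0 := by
    rw [← Complex.ofReal_add]; exact Complex.ofReal_ne_zero.mpr (by nlinarith)
  have hne3 : ((t:ℝ):ℂ) + ((t*q:ℝ):ℂ) ≠ 0 := by
    rw [← Complex.ofReal_add]; exact Complex.ofReal_ne_zero.mpr (by nlinarith)
  have hne4 : (1:ℂ) + ((q:ℝ):ℂ) ≠ 0 := by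
    rw [show (1:ℂ)+(q:ℂ) = ((1+q:ℝ):ℂ) by push_cast; ring]
    exact Complex.ofReal_ne_zero.mpr (by nlinarith)
  have hne5 : ((t:ℝ):ℂ) + ((t*p:ℝ):ℂ) ≠ 0 := by
    rw [← Complex.ofReal_add]; exact Complex.ofReal_ne_zero.mpr (by nlinarith)
  have hne6 : (1:ℂ) + ((p:ℝ):ℂ) ≠ 0 := by
    rw [show (1:ℂ)+(p:ℂ) = ((1+p:ℝ):ℂ) by push_cast; ring]
    exact Complex.ofReal_ne_zero.mpr (by nlinarith)
  have hA₁' : A₁ = ((p:ℂ) + (q:ℂ)*ζ)/((p:ℂ)+(q:ℂ)) := by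
    rw [hA₁, hb', hc', hB, hC, div_eq_div_iff hne1 hne2]
    push_cast
    ring
  have hB₁' : B₁ = (ζ^3 + (q:ℂ)*ζ)/(1+(q:ℂ)) := by
    rw [hB₁, ha', hc', hA, hC, div_eq_div_iff hne3 hne4]
    push_cast
    ring
  have hC₁' : C₁ = (ζ^3 + (p:ℂ))/(1+(p:ℂ)) := by
    rw [hC₁, ha', hb', hA, hB, div_eq_div_iff hne5 hne6]
    push_cast
    ring
  rw [Complex.dist_eq, Complex.dist_eq, hA₁', hB₁', hC₁', Complex.norm_def, Complex.norm_def]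
  congr 1
  apply Complex.ofReal_injective
  rw [← Complex.mul_conj, ← Complex.mul_conj]
  simp only [map_sub, map_add, map_div₀, map_mul, map_one, map_pow, hconj, Complex.conj_ofReal]
  rw [hp, hq]
  rw [hp, hq] at hne2
  rw [hq] at hne4
  rw [hp] at hne6
  have hΦ : ζ^6+ζ^5+ζ^4+ζ^3+ζ^2+ζ+1 = 0 := by
    rcases mul_eq_zero.mp (show (ζ-1)*(ζ^6+ζ^5+ζ^4+ζ^3+ζ^2+ζ+1) = 0 by linear_combination h7) with h' | h'
    · exact absurd (by linear_combination h' : ζ = 1) hζ1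
    · exact h'
  rw [div_sub_div _ _ hne6 hne2, div_sub_div _ _ hne6 hne4, div_sub_div _ _ hne6 hne2,
    div_sub_div _ _ hne6 hne4, div_mul_div_comm, div_mul_div_comm,
    div_eq_div_iff (mul_ne_zero (mul_ne_zero hne6 hne2) (mul_ne_zero hne6 hne2))
      (mul_ne_zero (mul_ne_zero hne6 hne4) (mul_ne_zero hne6 hne4))]
  linear_combination ((-1) * ζ ^ 45 + (-1) * ζ ^ 44 + (5) * ζ ^ 43 + (8) * ζ ^ 42 + (-16) * ζ ^ 40 + (-30) * ζ ^ 39 + (54) * ζ ^ 37 + (59) * ζ ^ 36 + (-2) * ζ ^ 35 + (-103) * ζ ^ 34 + (-104) * ζ ^ 33 + (38) * ζ ^ 32 + (149) * ζ ^ 31 + (118) * ζ ^ 30 + (-53) * ζ ^ 29 + (-176) * ζ ^ 28 + (-91) * ζ ^ 27 + (36) * ζ ^ 26 + (76) * ζ ^ 25 + (45) * ζ ^ 24 + (18) * ζ ^ 23 + (78) * ζ ^ 22 + (60) * ζ ^ 21 + (-91) * ζ ^ 20 + (-188) * ζ ^ 19 + (-136) * ζ ^ 18 + (64) * ζ ^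 17 + (204) * ζ ^ 16 + (140) * ζ ^ 15 + ζ ^ 14 + (-99) * ζ ^ 13 + (-93) * ζ ^ 12 + (-24) * ζ ^ 11 + (15) * ζ ^ 10 + (26) * ζ ^ 9 + (17) * ζ ^ 8 + (3) * ζ ^ 7 + (-1) * ζ ^ 6 + (-3) * ζ ^ 5 + (-2) * ζ ^ 4) * hΦ
end

section
/- Let ζ = exp(2πi/7) and consider the heptagonal triangle with vertices A = ζ³, B = 1, C = ζ in ℂ (its angles are ∠A = π/7, ∠B = 2π/7, ∠C = 4π/7). With side lengths a = dist(B,C), b = dist(C,A), c = dist(A,B), define the internal bisector foot C₁ = (a·A + b·B)/(a+b) and the external bisector feet A₂ = (c·C − b·B)/(c−b), B₂ = (c·C − a·A)/(c−a). Then dist(A₂, B₂) = dist(A₂, C₁); that is, the bisectral triangle A₂B₂C₁ of the heptagonal triangle is isosceles. -/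
set_option maxHeartbeats 4000000 in
theorem stmt_14 (ζ A B C : ℂ) (hζ : ζ = Complex.exp (2 * Real.pi * Complex.I / 7))
    (hA : A = ζ ^ 3) (hB : B = 1) (hC : C = ζ)
    (a b c : ℝ) (ha : a = dist B C) (hb : b = dist C A) (hc : c = dist A B)
    (C₁ A₂ B₂ : ℂ)
    (hC₁ : C₁ = ((a : ℂ) * A + (b : ℂ) * B) / ((a : ℂ) + (b : ℂ)))
    (hA₂ : A₂ = ((c : ℂ) * C - (b : ℂ) * B) / ((c : ℂ) - (b : ℂ)))
    (hB₂ : B₂ = ((c : ℂ) * C - (a : ℂ) * A) / ((c : ℂ) - (a : ℂ))) :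
    dist A₂ B₂ = dist A₂ C₁ := by
  have hπ := Real.pi_pos
  set θ : ℝ := 2 * Real.pi / 7 with hθdef
  have hζ' : ζ = Complex.exp ((θ : ℂ) * Complex.I) := by
    rw [hζ]; congr 1; rw [hθdef]; push_cast; ring
  set x : ℝ := Real.cos θ with hxdef
  set s : ℝ := Real.sin θ with hsdef
  have hre : ζ.re = x := by rw [hζ', Complex.exp_ofReal_mul_I_re]
  have him : ζ.im = s := by rw [hζ', Complex.exp_ofReal_mul_I_im]
  have hs2 : s ^ 2 = 1 - x ^ 2 := by
    have h := Real.sin_sq_add_cos_sq θ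
    rw [← hxdef, ← hsdef] at h
    linarith
  have hζ3 : ζ ^ 3 = Complex.exp (((3 * θ : ℝ) : ℂ) * Complex.I) := by
    rw [hζ', ← Complex.exp_nat_mul]; congr 1; push_cast; ring
  have hre3 : (ζ ^ 3).re = 4 * x ^ 3 - 3 * x := by
    rw [hζ3, Complex.exp_ofReal_mul_I_re, Real.cos_three_mul]
  have him3 : (ζ ^ 3).im = s * (4 * x ^ 2 - 1) := by
    rw [hζ3, Complex.exp_ofReal_mul_I_im, Real.sin_three_mul]
    linear_combination (-4 * s) * hs2
  have hs0 : 0 < s := by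
    have := Real.sin_pos_of_pos_of_lt_pi (x := θ) (by rw [hθdef]; positivity)
      (by rw [hθdef]; linarith)
    rw [← hsdef] at this; exact this
  have hx0 : 0 < x := by
    have := Real.cos_pos_of_mem_Ioo (x := θ) ⟨by rw [hθdef]; linarith, by rw [hθdef]; linarith⟩
    rw [← hxdef] at this; exact this
  have hx1 : x < 1 := by
    refine lt_of_pow_lt_pow_left₀ 2 zero_le_one ?_
    have h1 : 0 < s ^ 2 := pow_pos hs0 2
    rw [one_pow]; linarith [hs2]
  have hcos4 : Real.cos (2 * (2 * θ)) = 2 * (2 * x ^ 2 - 1) ^ 2 - 1 := by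
    rw [Real.cos_two_mul, Real.cos_two_mul, ← hxdef]
  have hcos43 : Real.cos (2 * (2 * θ)) = Real.cos (3 * θ) := by
    rw [show 2 * (2 * θ) = 2 * Real.pi - 3 * θ by rw [hθdef]; ring, Real.cos_two_pi_sub]
  have he : 2 * (2 * x ^ 2 - 1) ^ 2 - 1 = 4 * x ^ 3 - 3 * x := by
    rw [← hcos4, hcos43, Real.cos_three_mul, ← hxdef]
  have hp : 8 * x ^ 3 + 4 * x ^ 2 - 4 * x - 1 = 0 := by
    have hfac : (x - 1) * (8 * x ^ 3 + 4 * x ^ 2 - 4 * x - 1) = 0 := by linear_combination he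
    rcases mul_eq_zero.mp hfac with h | h
    · linarith
    · exact h
  have hxh : 1 / 2 < x := by
    by_contra h
    push_neg at h
    have h1 : x ^ 2 ≤ x / 2 := by
      rw [pow_two]
      calc x * x ≤ x * (1 / 2) := mul_le_mul_of_nonneg_left h hx0.le
      _ = x / 2 := by ring
    have h2 : x ^ 3 ≤ x ^ 2 / 2 := by
      rw [pow_succ]
      calc x ^ 2 * x ≤ x ^ 2 * (1 / 2) := mul_le_mul_of_nonneg_left h (sq_nonneg x)
      _ = x ^ 2 / 2 := by ring
    linarith [hp, h1, h2]
  have ha0 : 0 ≤ a := ha ▸ dist_nonneg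
  have hb0 : 0 ≤ b := hb ▸ dist_nonneg
  have hc0 : 0 ≤ c := hc ▸ dist_nonneg
  have ha2 : a ^ 2 = 2 - 2 * x := by
    rw [ha, hB, hC, Complex.dist_eq, Complex.sq_norm, Complex.normSq_apply]
    simp only [Complex.sub_re, Complex.sub_im, Complex.one_re, Complex.one_im, hre, him]
    linear_combination hs2
  have hb2 : b ^ 2 = 4 - 4 * x ^ 2 := by
    rw [hb, hC, hA, Complex.dist_eq, Complex.sq_norm, Complex.normSq_apply]
    simp only [Complex.sub_re, Complex.sub_im, hre, him, hre3, him3]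
    linear_combination (16 * x ^ 4 - 16 * x ^ 2 + 4) * hs2
  have hc2 : c ^ 2 = 2 - 2 * (4 * x ^ 3 - 3 * x) := by
    rw [hc, hA, hB, Complex.dist_eq, Complex.sq_norm, Complex.normSq_apply]
    simp only [Complex.sub_re, Complex.sub_im, Complex.one_re, Complex.one_im, hre3, him3]
    linear_combination (16 * x ^ 4 - 8 * x ^ 2 + 1) * hs2
  have hposof : ∀ u : ℝ, 0 ≤ u → 0 < u ^ 2 → 0 < u := by
    intro u h1 h2
    rcases h1.lt_or_eq with h | h
    · exact h
    · exfalso; rw [← h] at h2; simp at h2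
  have hapos : 0 < a := hposof a ha0 (by rw [ha2]; linarith)
  have hbpos : 0 < b := hposof b hb0 (by
    rw [hb2, show 4 - 4 * x ^ 2 = 4 * ((1 - x) * (1 + x)) by ring]
    have := mul_pos (show (0:ℝ) < 1 - x by linarith) (show (0:ℝ) < 1 + x by linarith)
    linarith)
  have hcpos : 0 < c := hposof c hc0 (by
    rw [hc2, show 2 - 2 * (4 * x ^ 3 - 3 * x) = 2 * ((1 - x) * (2 * x + 1) ^ 2) by ring]
    have := mul_pos (show (0:ℝ) < 1 - x by linarith)
      (pow_pos (show (0:ℝ) < 2 * x + 1 by linarith) 2)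
    linarith)
  have hR4 : 0 < 4 * x ^ 2 - 2 - 2 * (4 * x ^ 3 - 3 * x) := by
    have h1 : 0 < 4 * x ^ 2 + 2 * x - 1 := by linarith [pow_pos hx0 2]
    have := mul_pos (show (0:ℝ) < 2 * (1 - x) by linarith) h1
    calc (0:ℝ) < 2 * (1 - x) * (4 * x ^ 2 + 2 * x - 1) := this
    _ = 4 * x ^ 2 - 2 - 2 * (4 * x ^ 3 - 3 * x) := by ring
  have hR5 : 0 < 2 * x - 2 * (4 * x ^ 3 - 3 * x) := by
    have := mul_pos (mul_pos (show (0:ℝ) < 8 * x by linarith)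
      (show (0:ℝ) < 1 - x by linarith)) (show (0:ℝ) < 1 + x by linarith)
    calc (0:ℝ) < 8 * x * (1 - x) * (1 + x) := this
    _ = 2 * x - 2 * (4 * x ^ 3 - 3 * x) := by ring
  have hR6 : 0 < 2 * x - (4 * x ^ 2 - 2) := by
    have := mul_pos (show (0:ℝ) < 2 * (1 - x) by linarith)
      (show (0:ℝ) < 2 * x + 1 by linarith)
    calc (0:ℝ) < 2 * (1 - x) * (2 * x + 1) := this
    _ = 2 * x - (4 * x ^ 2 - 2) := by ring
  have hcb : b < c := by
    refine lt_of_pow_lt_pow_left₀ 2 hc0 ?_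
    rw [hb2, hc2]; linarith [hR4]
  have hca2 : a < c := by
    refine lt_of_pow_lt_pow_left₀ 2 hc0 ?_
    rw [ha2, hc2]; linarith [hR5]
  have hab : a * b = 4 * x ^ 2 - 2 - 2 * (4 * x ^ 3 - 3 * x) := by
    have h0 : (a * b - (4 * x ^ 2 - 2 - 2 * (4 * x ^ 3 - 3 * x)))
        * (a * b + (4 * x ^ 2 - 2 - 2 * (4 * x ^ 3 - 3 * x))) = 0 := by
      linear_combination b ^ 2 * ha2 + (2 - 2 * x) * hb2 + (-4 + 12 * x ^ 2 - 8 * x ^ 3) * hp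
    rcases mul_eq_zero.mp h0 with h | h
    · linarith
    · exfalso; linarith [mul_pos hapos hbpos, hR4]
  have hbc : b * c = 2 * x - 2 * (4 * x ^ 3 - 3 * x) := by
    have h0 : (b * c - (2 * x - 2 * (4 * x ^ 3 - 3 * x)))
        * (b * c + (2 * x - 2 * (4 * x ^ 3 - 3 * x))) = 0 := by
      linear_combination c ^ 2 * hb2 + (4 - 4 * x ^ 2) * hc2 + (-8 + 8 * x + 8 * x ^ 2 - 8 * x ^ 3) * hp
    rcases mul_eq_zero.mp h0 with h | h
    · linarith
    · exfalso; linarith [mul_pos hbpos hcpos, hR5]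
  have hca : c * a = 2 * x - (4 * x ^ 2 - 2) := by
    have h0 : (c * a - (2 * x - (4 * x ^ 2 - 2)))
        * (c * a + (2 * x - (4 * x ^ 2 - 2))) = 0 := by
      linear_combination a ^ 2 * hc2 + (2 - 2 * (4 * x ^ 3 - 3 * x)) * ha2
    rcases mul_eq_zero.mp h0 with h | h
    · linarith
    · exfalso; linarith [mul_pos hcpos hapos, hR6]
  have hcbne : ((c : ℂ) - (b : ℂ)) ≠ 0 := by
    rw [show ((c : ℂ) - (b : ℂ)) = ((c - b : ℝ) : ℂ) by push_cast; ring]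
    exact Complex.ofReal_ne_zero.mpr (by linarith)
  have hcane : ((c : ℂ) - (a : ℂ)) ≠ 0 := by
    rw [show ((c : ℂ) - (a : ℂ)) = ((c - a : ℝ) : ℂ) by push_cast; ring]
    exact Complex.ofReal_ne_zero.mpr (by linarith)
  have habne : ((a : ℂ) + (b : ℂ)) ≠ 0 := by
    rw [show ((a : ℂ) + (b : ℂ)) = ((a + b : ℝ) : ℂ) by push_cast; ring]
    exact Complex.ofReal_ne_zero.mpr (by linarith)
  have key1 : A₂ - B₂ = (((c * (b - a) : ℝ) : ℂ) * ζ - ((b * (c - a) : ℝ) : ℂ)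
      + ((a * (c - b) : ℝ) : ℂ) * ζ ^ 3) / (((c : ℂ) - b) * ((c : ℂ) - a)) := by
    rw [hA₂, hB₂, hA, hB, hC]
    field_simp
    push_cast
    ring
  have key2 : A₂ - C₁ = (((c * (a + b) : ℝ) : ℂ) * ζ - ((a * b + b * c : ℝ) : ℂ)
      + ((a * b - a * c : ℝ) : ℂ) * ζ ^ 3) / (((c : ℂ) - b) * ((a : ℂ) + b)) := by
    rw [hA₂, hC₁, hA, hB, hC]
    field_simp
    push_cast
    ring
  rw [Complex.dist_eq, Complex.dist_eq, key1, key2, norm_div, norm_div]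
  have hd1 : ‖((c : ℂ) - b) * ((c : ℂ) - a)‖ = (c - b) * (c - a) := by
    rw [norm_mul, show ((c : ℂ) - b) = ((c - b : ℝ) : ℂ) by push_cast; ring,
      show ((c : ℂ) - a) = ((c - a : ℝ) : ℂ) by push_cast; ring,
      Complex.norm_real, Complex.norm_real, Real.norm_eq_abs, Real.norm_eq_abs, abs_of_pos (by linarith), abs_of_pos (by linarith)]
  have hd2 : ‖((c : ℂ) - b) * ((a : ℂ) + b)‖ = (c - b) * (a + b) := by
    rw [norm_mul, show ((c : ℂ) - b) = ((c - b : ℝ) : ℂ) by push_cast; ring,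
      show ((a : ℂ) + b) = ((a + b : ℝ) : ℂ) by push_cast; ring,
      Complex.norm_real, Complex.norm_real, Real.norm_eq_abs, Real.norm_eq_abs, abs_of_pos (by linarith), abs_of_pos (by linarith)]
  rw [hd1, hd2, div_eq_div_iff (ne_of_gt (mul_pos (by linarith : (0:ℝ) < c - b) (by linarith : (0:ℝ) < c - a))) (ne_of_gt (mul_pos (by linarith : (0:ℝ) < c - b) (by linarith : (0:ℝ) < a + b)))]
  refine (sq_eq_sq₀ (mul_nonneg (norm_nonneg _)
      (le_of_lt (mul_pos (by linarith : (0:ℝ) < c - b) (by linarith : (0:ℝ) < a + b))))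
    (mul_nonneg (norm_nonneg _)
      (le_of_lt (mul_pos (by linarith : (0:ℝ) < c - b) (by linarith : (0:ℝ) < c - a))))).mp ?_
  simp only [mul_pow, Complex.sq_norm, Complex.normSq_apply]
  simp only [Complex.add_re, Complex.sub_re, Complex.mul_re, Complex.add_im, Complex.sub_im,
    Complex.mul_im, Complex.ofReal_re, Complex.ofReal_im, hre, him, hre3, him3]
  linear_combination ((-4)*c^6 + (4)*c^6*x^2 + (20)*b*c^5 + (-8)*b*c^5*x + (-20)*b*c^5*x^2 + (8)*b*c^5*x^3 + (-34)*b^2*c^4 + (34)*b^2*c^4*x + (40)*b^2*c^4*x^2 + (-40)*b^2*c^4*x^3 + (20)*b^3*c^3 + (-60)*b^3*c^3*x + (-40)*b^3*c^3*x^2 + (80)*b^3*c^3*x^3 + (4)*b^4*c^2 + (56)*b^4*c^2*x + (20)*b^4*c^2*x^2 + (-80)*b^4*c^2*x^3 + (-8)*b^5*c + (-28)*b^5*c*x + (-4)*b^5*c*x^2 + (40)*b^5*c*x^3 + (2)*b^6 + (6)*b^6*x + (-8)*b^6*x^3 + (8)*a*c^5 + (-8)*a*c^5*x^2 + (-24)*a*b*c^4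 + (24)*a*b*c^4*x^2 + (20)*a*b^2*c^3 + (-12)*a*b^2*c^3*x + (-24)*a*b^2*c^3*x^2 + (16)*a*b^2*c^3*x^3 + (4)*a*b^3*c^2 + (36)*a*b^3*c^2*x + (8)*a*b^3*c^2*x^2 + (-48)*a*b^3*c^2*x^3 + (-12)*a*b^4*c + (-36)*a*b^4*c*x + (48)*a*b^4*c*x^3 + (4)*a*b^5 + (12)*a*b^5*x + (-16)*a*b^5*x^3) * ha2 + ((64) + (128)*x + (-320)*x^2 + (-512)*x^3 + (704)*x^4 + (640)*x^5 + (-704)*x^6 + (-256)*x^7 + (256)*x^8 + (64)*c^2 + (384)*c^2*x + (-384)*c^2*x^2 + (-1152)*c^2*x^3 + (960)*c^2*x^4 + (768)*c^2*x^5 + (-640)*c^2*x^6 + (-68)*c^4 + (136)*c^4*x + (12)*c^4*x^2 + (-160)*c^4*x^3 + (80)*c^4*x^4 + (-2)*c^6 + (2)*c^6*x + (-64)*b*c + (-160)*b*c*x + (256)*b*c*x^2 + (512)*b*c*x^3 + (-512)*b*c*x^4 + (-352)*b*c*x^5 + (320)*b*c*x^6 + (24)*b*c^3 + (-144)*b*c^3*x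 + (56)*b*c^3*x^2 + (224)*b*c^3*x^3 + (-160)*b*c^3*x^4 + (4)*b*c^5 + (-4)*b*c^5*x + (16)*b^2 + (32)*b^2*x + (-64)*b^2*x^2 + (-96)*b^2*x^3 + (112)*b^2*x^4 + (64)*b^2*x^5 + (-64)*b^2*x^6 + (16)*b^2*c^2 + (96)*b^2*c^2*x + (-80)*b^2*c^2*x^2 + (-192)*b^2*c^2*x^3 + (160)*b^2*c^2*x^4 + (-16)*b^3*c + (-40)*b^3*c*x + (48)*b^3*c*x^2 + (88)*b^3*c*x^3 + (-80)*b^3*c*x^4 + (-4)*b^3*c^3 + (4)*b^3*c^3*x + (4)*b^4 + (8)*b^4*x + (-12)*b^4*x^2 + (-16)*b^4*x^3 + (16)*b^4*x^4 + (2)*b^4*c^2 + (-2)*b^4*c^2*x + (-96)*a*c + (-256)*a*c*x + (320)*a*c*x^2 + (832)*a*c*x^3 + (-544)*a*c*x^4 + (-704)*a*c*x^5 + (320)*a*c*x^6 + (128)*a*c*x^7 + (56)*a*c^3 + (-144)*a*c^3*x + (-104)*a*c^3*x^2 + (288)*a*c^3*x^3 + (32)*a*c^3*x^4 + (-128)*a*c^3*x^5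 + (12)*a*c^5 + (-24)*a*c^5*x + (-12)*a*c^5*x^2 + (24)*a*c^5*x^3 + (32)*a*b + (64)*a*b*x + (-128)*a*b*x^2 + (-192)*a*b*x^3 + (224)*a*b*x^4 + (128)*a*b*x^5 + (-128)*a*b*x^6 + (8)*a*b*c^2 + (112)*a*b*c^2*x + (-8)*a*b*c^2*x^2 + (-256)*a*b*c^2*x^3 + (48)*a*b*c^2*x^4 + (96)*a*b*c^2*x^5 + (-12)*a*b*c^4 + (28)*a*b*c^4*x + (16)*a*b*c^4*x^2 + (-32)*a*b*c^4*x^3 + (-24)*a*b^2*c + (-64)*a*b^2*c*x + (56)*a*b^2*c*x^2 + (144)*a*b^2*c*x^3 + (-80)*a*b^2*c*x^4 + (-32)*a*b^2*c*x^5 + (4)*a*b^2*c^3 + (-20)*a*b^2*c^3*x + (-16)*a*b^2*c^3*x^2 + (32)*a*b^2*c^3*x^3 + (8)*a*b^3 + (16)*a*b^3*x + (-24)*a*b^3*x^2 + (-32)*a*b^3*x^3 + (32)*a*b^3*x^4 + (12)*a*b^3*c^2*x + (12)*a*b^3*c^2*x^2 + (-24)*a*b^3*c^2*x^3 + (-4)*a*b^4*c*x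 + (-4)*a*b^4*c*x^2 + (8)*a*b^4*c*x^3) * hb2 + ((-352) + (672)*x + (1984)*x^2 + (-3008)*x^3 + (-4320)*x^4 + (5408)*x^5 + (4224)*x^6 + (-4608)*x^7 + (-1536)*x^8 + (1536)*x^9 + (-304)*c^2 + (480)*c^2*x + (448)*c^2*x^2 + (-992)*c^2*x^3 + (48)*c^2*x^4 + (512)*c^2*x^5 + (-192)*c^2*x^6 + (-16)*c^4 + (16)*c^4*x + (16)*c^4*x^2 + (-16)*c^4*x^3 + (208)*b*c + (-384)*b*c*x + (-384)*b*c*x^2 + (928)*b*c*x^3 + (112)*b*c*x^4 + (-672)*b*c*x^5 + (64)*b*c*x^6 + (128)*b*c*x^7 + (56)*b*c^3 + (-72)*b*c^3*x + (-40)*b*c^3*x^2 + (72)*b*c^3*x^3 + (-16)*b*c^3*x^4 + (352)*a*c + (-416)*a*c*x + (-1536)*a*c*x^2 + (960)*a*c*x^3 + (2784)*a*c*x^4 + (-672)*a*c*x^5 + (-2368)*a*c*x^6 + (128)*a*c*x^7 + (768)*a*c*x^8 + (64)*a*c^3 + (-112)*a*c^3*x + (-112)*a*c^3*x^2 + (208)*a*c^3*x^3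 + (48)*a*c^3*x^4 + (-96)*a*c^3*x^5 + (-176)*a*b + (128)*a*b*x + (1280)*a*b*x^2 + (160)*a*b*x^3 + (-2832)*a*b*x^4 + (-1184)*a*b*x^5 + (2496)*a*b*x^6 + (1408)*a*b*x^7 + (-768)*a*b*x^8 + (-512)*a*b*x^9 + (-104)*a*b*c^2 + (152)*a*b*c^2*x + (216)*a*b*c^2*x^2 + (-248)*a*b*c^2*x^3 + (-176)*a*b*c^2*x^4 + (96)*a*b*c^2*x^5 + (64)*a*b*c^2*x^6 + (-4)*a*b*c^4 + (8)*a*b*c^4*x + (4)*a*b*c^4*x^2 + (-8)*a*b*c^4*x^3) * hc2 + ((-224) + (-544)*x + (2688)*x^2 + (8384)*x^3 + (-4320)*x^4 + (-28320)*x^5 + (-4800)*x^6 + (39936)*x^7 + (16896)*x^8 + (-25600)*x^9 + (-14336)*x^10 + (6144)*x^11 + (4096)*x^12) * hab + ((160) + (-160)*x + (-1792)*x^2 + (576)*x^3 + (5792)*x^4 + (-1056)*x^5 + (-8000)*x^6 + (1152)*x^7 + (4864)*x^8 + (-512)*x^9 + (-1024)*x^10) * hbc + ((320) + (256)*x + (-3904)*x^2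 + (-5760)*x^3 + (11200)*x^4 + (21504)*x^5 + (-12992)*x^6 + (-32896)*x^7 + (6400)*x^8 + (23040)*x^9 + (-1024)*x^10 + (-6144)*x^11) * hca + ((-1)*b^2*c^6 + (2)*b^3*c^5 + (-2)*b^5*c^3 + (1)*b^6*c^2 + (-4)*a*b*c^6 + (8)*a*b*c^6*x^2 + (12)*a*b^2*c^5 + (-24)*a*b^2*c^5*x^2 + (-14)*a*b^3*c^4 + (32)*a*b^3*c^4*x^2 + (10)*a*b^4*c^3 + (-32)*a*b^4*c^3*x^2 + (-6)*a*b^5*c^2 + (24)*a*b^5*c^2*x^2 + (2)*a*b^6*c + (-8)*a*b^6*c*x^2 + (-4)*a^2*c^6 + (16)*a^2*c^6*x^2 + (-16)*a^2*c^6*x^4 + (20)*a^2*b*c^5 + (-72)*a^2*b*c^5*x^2 + (64)*a^2*b*c^5*x^4 + (-37)*a^2*b^2*c^4 + (120)*a^2*b^2*c^4*x^2 + (-80)*a^2*b^2*c^4*x^4 + (30)*a^2*b^3*c^3 + (-80)*a^2*b^3*c^3*x^2 + (-8)*a^2*b^4*c^2 + (80)*a^2*b^4*c^2*x^4 + (-2)*a^2*b^5*c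 + (24)*a^2*b^5*c*x^2 + (-64)*a^2*b^5*c*x^4 + (1)*a^2*b^6 + (-8)*a^2*b^6*x^2 + (16)*a^2*b^6*x^4 + (8)*a^3*c^5 + (-32)*a^3*c^5*x^2 + (32)*a^3*c^5*x^4 + (-24)*a^3*b*c^4 + (96)*a^3*b*c^4*x^2 + (-96)*a^3*b*c^4*x^4 + (22)*a^3*b^2*c^3 + (-80)*a^3*b^2*c^3*x^2 + (64)*a^3*b^2*c^3*x^4 + (-2)*a^3*b^3*c^2 + (-16)*a^3*b^3*c^2*x^2 + (64)*a^3*b^3*c^2*x^4 + (-6)*a^3*b^4*c + (48)*a^3*b^4*c*x^2 + (-96)*a^3*b^4*c*x^4 + (2)*a^3*b^5 + (-16)*a^3*b^5*x^2 + (32)*a^3*b^5*x^4) * hs2 + ((-640) + (640)*x + (7808)*x^2 + (-2944)*x^3 + (-30336)*x^4 + (6528)*x^5 + (55168)*x^6 + (-8832)*x^7 + (-51456)*x^8 + (6656)*x^9 + (23552)*x^10 + (-2048)*x^11 + (-4096)*x^12) * hp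
end
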